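/- arXiv:2008.01422 — 10 statements merged into one kernel-verified Lean document; each statement's English description precedes it below -/
import Mathlib

section
/- There exist a type D, a partial order on D making it a dcpo with a least element, and with at least two distinct elements, together with an order isomorphism between D and the type of Scott-continuous functions from D to D ordered pointwise (f ≤ g iff f x ≤ g x for all x). In other words, a nontrivial pointed dcpo isomorphic to its own Scott-continuous self-exponential exists. -/
/-!
Scott's `D∞`. Let `D₀ = Bool` and let `D_{n+1}` be the monotone self-maps of `D_n`; all levels are
finite. Embeddings `e_n : D_n → D_{n+1}` and retractions `p_n` with `e_n ∘ p_n ≤ id` are given by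
`e₀ b = const b`, `p₀ f = f ⊥`, `e_{n+1} f = e_n ∘ f ∘ p_n`, `p_{n+1} g = p_n ∘ g ∘ e_n`, and `D∞`
is the inverse limit along the `p_n`, with canonical embeddings `ε_n : D_n → D∞`. Because the
levels are finite, every coordinate of the supremum of a directed subset of `D∞` is attained by a
member of the subset: so `D∞` is a dcpo, and continuity can be checked one coordinate at a time.
The isomorphism sends a continuous `f` to the sequence `(z ↦ (f (ε_n z))_n)_n` of elements of
`D_{n+1}` (`psi`), with inverse `x ↦ (y ↦ ⨆ₖ ε_k (x_{k+1} (y_k)))` (`phi`).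
-/

/-- A partial order is a dcpo if every nonempty directed subset has a least upper bound. -/
def IsDcpo (α : Type*) [Preorder α] : Prop :=
  ∀ d : Set α, d.Nonempty → DirectedOn (· ≤ ·) d → ∃ a, IsLUB d a

/-- `D` is a nontrivial pointed dcpo order-isomorphic to its Scott-continuous
self-exponential (ordered pointwise). -/
def NontrivialPointedDcpoSelfExp (D : Type) [PartialOrder D] : Prop :=
  IsDcpo D ∧ (∃ bot : D, ∀ x : D, bot ≤ x) ∧ (∃ x y : D, x ≠ y) ∧
    (∀ f g : {f : D → D // ScottContinuous f}, f ≤ g ↔ ∀ x : D, f.1 x ≤ g.1 x) ∧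
    Nonempty ({f : D → D // ScottContinuous f} ≃o D)

open OmegaCompletePartialOrder

theorem DirectedOn.exists_isGreatest_of_finite {α : Type*} [PartialOrder α] [Finite α]
    {s : Set α} (hdir : DirectedOn (· ≤ ·) s) (hne : s.Nonempty) : ∃ m, IsGreatest s m := by
  obtain ⟨m, hm⟩ := s.toFinite.exists_maximal hne
  exact ⟨m, hm.1, hdir.is_top_of_is_max hm.1 fun _ ha hle => hm.2 ha hle⟩

structure EPSystem (D : ℕ → Type*) [∀ n, PartialOrder (D n)] where
  emb : ∀ n, D n →o D (n + 1)
  proj : ∀ n, D (n + 1) →o D n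
  proj_emb : ∀ n x, proj n (emb n x) = x
  emb_proj_le : ∀ n x, emb n (proj n x) ≤ x

namespace EPSystem

variable {D : ℕ → Type*} [∀ n, PartialOrder (D n)] (S : EPSystem D) {n m : ℕ}

def up (h : n ≤ m) : D n →o D m :=
  Nat.leRecOn h (fun g => (S.emb _).comp g) OrderHom.id

def down (h : n ≤ m) : D m →o D n :=
  Nat.leRecOn h (fun g => g.comp (S.proj _)) OrderHom.id

@[simp] lemma up_self (z : D n) : S.up le_rfl z = z := by
  simp [up, Nat.leRecOn_self]

@[simp] lemma down_self (z : D n) : S.down le_rfl z = z := by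
  simp [down, Nat.leRecOn_self]

lemma up_succ (h : n ≤ m) (h' : n ≤ m + 1) (z : D n) : S.up h' z = S.emb m (S.up h z) := by
  simp [up, Nat.leRecOn_succ h]

lemma down_succ (h : n ≤ m) (h' : n ≤ m + 1) (x : D (m + 1)) :
    S.down h' x = S.down h (S.proj m x) := by
  simp [down, Nat.leRecOn_succ h]

lemma up_emb (h : n + 1 ≤ m) (h' : n ≤ m) (z : D n) : S.up h (S.emb n z) = S.up h' z := by
  induction m, h using Nat.le_induction with
  | base => rw [up_self, up_succ S le_rfl, up_self]
  | succ m hm ih => rw [up_succ S hm, up_succ S (by omega), ih]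

lemma proj_down (h : n + 1 ≤ m) (h' : n ≤ m) (x : D m) :
    S.proj n (S.down h x) = S.down h' x := by
  induction m, h using Nat.le_induction with
  | base => rw [down_self, down_succ S le_rfl, down_self]
  | succ m hm ih => rw [down_succ S hm, down_succ S (by omega), ih]

lemma up_down_le (h : n ≤ m) (x : D m) : S.up h (S.down h x) ≤ x := by
  induction m, h using Nat.le_induction with
  | base => simp
  | succ m hm ih =>
    rw [up_succ S hm, down_succ S hm]
    exact ((S.emb m).mono (ih _)).trans (S.emb_proj_le m x)

@[ext] structure Limit where
  val : ∀ n, D n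
  proj_val : ∀ n, S.proj n (val (n + 1)) = val n

instance : CoeFun S.Limit fun _ => ∀ n, D n := ⟨Limit.val⟩

instance : PartialOrder S.Limit := PartialOrder.lift _ fun _ _ => Limit.ext

variable {S}

lemma Limit.le_def {x y : S.Limit} : x ≤ y ↔ ∀ n, x n ≤ y n := Iff.rfl

lemma Limit.down_apply (x : S.Limit) (h : n ≤ m) : S.down h (x m) = x n := by
  induction m, h using Nat.le_induction with
  | base => simp
  | succ m hm ih => rw [down_succ S hm, x.proj_val, ih]

lemma Limit.emb_apply_le (x : S.Limit) (n : ℕ) : S.emb n (x n) ≤ x (n + 1) :=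
  x.proj_val n ▸ S.emb_proj_le n _

variable (S)

def eps (n : ℕ) : D n →o S.Limit where
  toFun z := ⟨fun m => if h : n ≤ m then S.up h z else S.down (le_of_not_ge h) z, fun m => by
    by_cases hm : n ≤ m
    · simp only [dif_pos hm, dif_pos (hm.trans m.le_succ), up_succ S hm, proj_emb]
    by_cases hm' : n = m + 1
    · subst hm'
      simp only [dif_pos le_rfl, dif_neg hm, up_self, down_succ S le_rfl, down_self]
    · simp only [dif_neg hm, dif_neg (by omega : ¬n ≤ m + 1)]
      exact S.proj_down _ _ z⟩
  monotone' z z' hz m := by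
    by_cases hm : n ≤ m
    · simpa only [dif_pos hm] using (S.up hm).mono hz
    · simpa only [dif_neg hm] using (S.down _).mono hz

variable {S}

lemma eps_apply_of_le (h : n ≤ m) (z : D n) : S.eps n z m = S.up h z := dif_pos h

lemma eps_apply_of_ge (h : m ≤ n) (z : D n) : S.eps n z m = S.down h z := by
  rcases h.eq_or_lt with rfl | hlt
  · rw [eps_apply_of_le le_rfl, up_self, down_self]
  · exact dif_neg (by omega)

@[simp] lemma eps_apply_self (z : D n) : S.eps n z n = z := by
  rw [eps_apply_of_le le_rfl, up_self]

lemma eps_emb (z : D n) : S.eps (n + 1) (S.emb n z) = S.eps n z := by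
  ext m : 2
  by_cases hm : n + 1 ≤ m
  · rw [eps_apply_of_le hm, eps_apply_of_le (by omega), up_emb]
  · rw [eps_apply_of_ge (by omega), eps_apply_of_ge (by omega : m ≤ n),
      down_succ S (by omega), proj_emb]

lemma eps_up (h : n ≤ m) (z : D n) : S.eps m (S.up h z) = S.eps n z := by
  induction m, h using Nat.le_induction with
  | base => simp
  | succ m hm ih => rw [up_succ S hm, eps_emb, ih]

lemma eps_apply_le (x : S.Limit) (n : ℕ) : S.eps n (x n) ≤ x := Limit.le_def.2 fun m => by
  by_cases hm : n ≤ m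
  · rw [eps_apply_of_le hm, ← x.down_apply hm]
    exact S.up_down_le hm _
  · rw [eps_apply_of_ge (by omega), x.down_apply]

lemma gc_eps (n : ℕ) : GaloisConnection (S.eps n) (fun x => x n) := fun z x =>
  ⟨fun h => eps_apply_self z ▸ h n, fun h => ((S.eps n).mono h).trans (eps_apply_le x n)⟩

lemma monotone_eps_apply (x : S.Limit) : Monotone fun n => S.eps n (x n) := fun n m h => by
  dsimp only
  rw [← eps_up h, ← x.down_apply h]
  exact (S.eps m).mono (S.up_down_le h _)

lemma isLUB_range_eps_apply (x : S.Limit) : IsLUB (Set.range fun n => S.eps n (x n)) x :=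
  ⟨Set.forall_mem_range.2 (eps_apply_le x),
    fun _ hu => Limit.le_def.2 fun n => eps_apply_self (x n) ▸ hu ⟨n, rfl⟩ n⟩

section Finite

variable [∀ n, Finite (D n)]

theorem exists_isLUB_forall_exists_apply_eq {d : Set S.Limit} (hne : d.Nonempty)
    (hdir : DirectedOn (· ≤ ·) d) : ∃ a, IsLUB d a ∧ ∀ n, ∃ x ∈ d, x n = a n := by
  have hgreatest (n : ℕ) : ∃ v, IsGreatest ((fun x : S.Limit => x n) '' d) v :=
    (hdir.mono_comp fun _ _ h => h n).exists_isGreatest_of_finite (hne.image _)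
  choose g hg using hgreatest
  have coherent (n : ℕ) : S.proj n (g (n + 1)) = g n := by
    obtain ⟨x, hx, hxg : x (n + 1) = g (n + 1)⟩ := (hg (n + 1)).1
    obtain ⟨y, hy, hyg : y n = g n⟩ := (hg n).1
    refine le_antisymm ?_ ?_
    · rw [← hxg, x.proj_val]
      exact (hg n).2 ⟨x, hx, rfl⟩
    · rw [← hyg, ← y.proj_val]
      exact (S.proj n).mono ((hg (n + 1)).2 ⟨y, hy, rfl⟩)
  refine ⟨⟨g, coherent⟩, ⟨fun x hx n => (hg n).2 ⟨x, hx, rfl⟩, fun u hu => Limit.le_def.2 ?_⟩,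
    fun n => (hg n).1⟩
  intro n
  obtain ⟨x, hx, hxg : x n = g n⟩ := (hg n).1
  exact (hxg ▸ hu hx n : g n ≤ u n)

variable (S) in
lemma isDcpo_limit : IsDcpo S.Limit := fun _ hne hdir =>
  (exists_isLUB_forall_exists_apply_eq hne hdir).imp fun _ => And.left

lemma exists_mem_apply_eq_of_isLUB {d : Set S.Limit} (hne : d.Nonempty)
    (hdir : DirectedOn (· ≤ ·) d) {a : S.Limit} (ha : IsLUB d a) (n : ℕ) :
    ∃ x ∈ d, x n = a n := by
  obtain ⟨b, hb, hattained⟩ := exists_isLUB_forall_exists_apply_eq hne hdir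
  exact hb.unique ha ▸ hattained n

lemma exists_isLUB_range (c : Chain S.Limit) : ∃ a, IsLUB (Set.range c) a :=
  S.isDcpo_limit _ (Set.range_nonempty c) c.monotone.directed_le.directedOn_range

noncomputable instance : OmegaCompletePartialOrder S.Limit where
  ωSup c := (exists_isLUB_range c).choose
  le_ωSup c n := (exists_isLUB_range c).choose_spec.1 ⟨n, rfl⟩
  ωSup_le c _ h := (exists_isLUB_range c).choose_spec.2 (Set.forall_mem_range.2 h)

lemma ωSup_apply_eq (c : Chain S.Limit) {n N : ℕ} {v : D n} (hc : ∀ k ≥ N, c k n = v) :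
    (ωSup c) n = v := by
  obtain ⟨_, ⟨k, rfl⟩, hk⟩ := exists_mem_apply_eq_of_isLUB (Set.range_nonempty c)
    c.monotone.directed_le.directedOn_range (isLUB_range_ωSup c) n
  refine le_antisymm ?_ ?_
  · rw [← hk, ← hc (max k N) (le_max_right _ _)]
    exact c.monotone (le_max_left k N) n
  · rw [← hc N le_rfl]
    exact le_ωSup c N n

end Finite

end EPSystem

namespace ScottModel

-- Each level is bundled with its order, so that `Level (n + 1)` is by definition
-- `Level n →o Level n`.
def levelAux : ℕ → (α : Type) × PartialOrder α
  | 0 => ⟨Bool, inferInstance⟩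
  | n + 1 => letI := (levelAux n).2; ⟨(levelAux n).1 →o (levelAux n).1, inferInstance⟩

abbrev Level (n : ℕ) : Type := (levelAux n).1

instance (n : ℕ) : PartialOrder (Level n) := (levelAux n).2

instance (n : ℕ) : FunLike (Level (n + 1)) (Level n) (Level n) :=
  inferInstanceAs (FunLike (Level n →o Level n) _ _)

instance (n : ℕ) : OrderHomClass (Level (n + 1)) (Level n) (Level n) :=
  inferInstanceAs (OrderHomClass (Level n →o Level n) _ _)

instance instFiniteLevel : ∀ n, Finite (Level n)
  | 0 => inferInstanceAs (Finite Bool)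
  | n + 1 =>
    have := instFiniteLevel n
    Finite.of_injective _ (DFunLike.coe_injective (F := Level (n + 1)))

@[ext] lemma Level.ext {n : ℕ} {f g : Level (n + 1)} (h : ∀ x, f x = g x) : f = g :=
  DFunLike.ext f g h

lemma Level.le_def {n : ℕ} {f g : Level (n + 1)} : f ≤ g ↔ ∀ x, f x ≤ g x := Iff.rfl

def conj {α β : Type} [Preorder α] [Preorder β] (e : α →o β) (p : β →o α) :
    (α →o α) →o (β →o β) :=
  ⟨fun f => e.comp (f.comp p), fun _ _ h x => e.mono (h (p x))⟩

def embProj : ∀ n, (Level n →o Level (n + 1)) × (Level (n + 1) →o Level n)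
  | 0 => (OrderHom.const _, ⟨fun f => f false, fun _ _ h => h false⟩)
  | n + 1 => (conj (embProj n).1 (embProj n).2, conj (embProj n).2 (embProj n).1)

abbrev emb (n : ℕ) : Level n →o Level (n + 1) := (embProj n).1
abbrev proj (n : ℕ) : Level (n + 1) →o Level n := (embProj n).2

lemma emb_succ_apply {n : ℕ} (f : Level (n + 1)) (x : Level (n + 1)) :
    emb (n + 1) f x = emb n (f (proj n x)) := rfl

lemma proj_succ_apply {n : ℕ} (f : Level (n + 2)) (x : Level n) :
    proj (n + 1) f x = proj n (f (emb n x)) := rfl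

lemma proj_emb (n : ℕ) (x : Level n) : proj n (emb n x) = x := by
  induction n with
  | zero => rfl
  | succ n ih => ext y; rw [proj_succ_apply, emb_succ_apply, ih, ih]

lemma emb_proj_le (n : ℕ) (f : Level (n + 1)) : emb n (proj n f) ≤ f := by
  induction n with
  | zero => exact Level.le_def.2 fun x => OrderHomClass.mono f (Bool.false_le x)
  | succ n ih =>
    refine Level.le_def.2 fun x => ?_
    rw [emb_succ_apply, proj_succ_apply]
    exact (ih _).trans (OrderHomClass.mono f (ih x))

def system : EPSystem Level := ⟨emb, proj, proj_emb, emb_proj_le⟩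

abbrev Dinf : Type := system.Limit

lemma down_succ_apply {n m : ℕ} (h : n ≤ m) (h' : n + 1 ≤ m + 1) (f : Level (m + 1))
    (z : Level n) : system.down h' f z = system.down h (f (system.up h z)) := by
  induction m, h using Nat.le_induction with
  | base => simp
  | succ m hm ih =>
    rw [system.down_succ (by omega), ih (by omega), system.down_succ hm, system.up_succ hm]
    rfl

def phiChain (x y : Dinf) : Chain Dinf :=
  ⟨fun k => system.eps k (x (k + 1) (y k)), monotone_nat_of_le_succ fun k => by
    rw [← system.eps_emb]
    refine (system.eps (k + 1)).mono ?_
    calc emb k (x (k + 1) (y k)) = emb (k + 1) (x (k + 1)) (y (k + 1)) := by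
          rw [emb_succ_apply, ← y.proj_val]; rfl
      _ ≤ x (k + 2) (y (k + 1)) := x.emb_apply_le (k + 1) _⟩

lemma phiChain_mono {x x' y y' : Dinf} (hx : x ≤ x') (hy : y ≤ y') :
    phiChain x y ≤ phiChain x' y' := fun k =>
  ⟨k, (system.eps k).mono ((Level.le_def.1 (hx (k + 1)) _).trans (OrderHomClass.mono _ (hy k)))⟩

noncomputable def phi (x : Dinf) : Dinf →o Dinf :=
  ⟨fun y => ωSup (phiChain x y), fun _ _ hy => ωSup_le_ωSup_of_le (phiChain_mono le_rfl hy)⟩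

lemma phi_mono : Monotone phi := fun _ _ hx _ =>
  ωSup_le_ωSup_of_le (phiChain_mono hx le_rfl)

lemma scottContinuous_phi (x : Dinf) : ScottContinuous (phi x) := by
  intro d hne hdir a ha
  refine ⟨(phi x).monotone.mem_upperBounds_image ha.1, fun u hu => ωSup_le _ _ fun k => ?_⟩
  obtain ⟨y, hy, hya⟩ := EPSystem.exists_mem_apply_eq_of_isLUB hne hdir ha k
  calc phiChain x a k = phiChain x y k := by
        show system.eps k (x (k + 1) (a k)) = system.eps k (x (k + 1) (y k))
        rw [hya]
    _ ≤ phi x y := le_ωSup (phiChain x y) k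
    _ ≤ u := hu ⟨y, hy, rfl⟩

lemma phi_eps_apply (x : Dinf) {n : ℕ} (z : Level n) :
    phi x (system.eps n z) n = x (n + 1) z := by
  refine EPSystem.ωSup_apply_eq _ (N := n) fun k hk => ?_
  show system.eps k (x (k + 1) (system.eps n z k)) n = x (n + 1) z
  rw [EPSystem.eps_apply_of_ge hk, EPSystem.eps_apply_of_le hk,
    ← down_succ_apply hk (by omega), x.down_apply]

def psiSucc (f : Dinf →o Dinf) (n : ℕ) : Level (n + 1) :=
  (⟨fun z => f (system.eps n z) n, fun _ _ h => f.mono ((system.eps n).mono h) n⟩ :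
    Level n →o Level n)

lemma proj_psiSucc (f : Dinf →o Dinf) (n : ℕ) :
    proj (n + 1) (psiSucc f (n + 1)) = psiSucc f n := by
  ext z
  show proj n (f (system.eps (n + 1) (system.emb n z)) (n + 1)) = f (system.eps n z) n
  rw [system.eps_emb]
  exact (f _).proj_val n

def psi : (Dinf →o Dinf) →o Dinf where
  toFun f := ⟨fun | 0 => proj 0 (psiSucc f 0) | n + 1 => psiSucc f n,
    fun | 0 => rfl | n + 1 => proj_psiSucc f n⟩
  monotone' f g h := by
    have hsucc (n : ℕ) : psiSucc f n ≤ psiSucc g n := fun z => h _ n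
    rintro (_ | n)
    · exact (proj 0).mono (hsucc 0)
    · exact hsucc n

lemma psi_phi (x : Dinf) : psi (phi x) = x := by
  have hsucc (n : ℕ) : psiSucc (phi x) n = x (n + 1) := by
    ext z
    exact phi_eps_apply x z
  ext (_ | n) : 2
  · exact (congrArg (proj 0) (hsucc 0)).trans (x.proj_val 0)
  · exact hsucc n

lemma phi_psi {f : Dinf → Dinf} (hf : ScottContinuous f) (y : Dinf) :
    phi (psi ⟨f, hf.monotone⟩) y = f y := by
  refine le_antisymm (ωSup_le _ _ fun k => ?_) ?_
  · exact (system.eps_apply_le _ k).trans (hf.monotone (system.eps_apply_le y k))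
  · have hy := hf (Set.range_nonempty _)
      (system.monotone_eps_apply y).directed_le.directedOn_range (system.isLUB_range_eps_apply y)
    refine hy.2 (Set.forall_mem_image.2 (Set.forall_mem_range.2 fun k => ?_))
    refine (system.isLUB_range_eps_apply _).2 (Set.forall_mem_range.2 fun j => ?_)
    calc system.eps j (f (system.eps k (y k)) j)
        ≤ system.eps (max j k) (f (system.eps k (y k)) (max j k)) :=
          system.monotone_eps_apply _ (le_max_left j k)
      _ ≤ system.eps (max j k) (f (system.eps (max j k) (y (max j k))) (max j k)) :=
          (system.eps _).mono (hf.monotone (system.monotone_eps_apply y (le_max_right j k)) _)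
      _ = phiChain (psi ⟨f, hf.monotone⟩) y (max j k) := rfl
      _ ≤ _ := le_ωSup _ _

noncomputable def isoSelfExp : {f : Dinf → Dinf // ScottContinuous f} ≃o Dinf where
  toFun f := psi ⟨f.1, f.2.monotone⟩
  invFun x := ⟨phi x, scottContinuous_phi x⟩
  left_inv f := Subtype.ext (funext (phi_psi f.2))
  right_inv := psi_phi
  map_rel_iff' {f g} := by
    refine ⟨fun h y => ?_, fun h => psi.mono h⟩
    rw [← phi_psi f.2, ← phi_psi g.2]
    exact phi_mono h y

end ScottModel

open ScottModel in
/-- There exists a nontrivial pointed dcpo isomorphic to its own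
Scott-continuous self-exponential. -/
theorem exists_nontrivial_pointed_dcpo_iso_self_exponential :
    ∃ (D : Type) (inst : PartialOrder D), @NontrivialPointedDcpoSelfExp D inst := by
  have hbot (x : Dinf) : system.eps 0 false ≤ x := (system.gc_eps 0).l_le (Bool.false_le _)
  have hne : system.eps 0 false ≠ system.eps 0 true := fun h => Bool.false_ne_true <|
    (system.eps_apply_self (n := 0) false).symm.trans (h ▸ system.eps_apply_self (n := 0) true)
  exact ⟨Dinf, inferInstance, system.isDcpo_limit, ⟨_, hbot⟩, ⟨_, _, hne⟩, fun _ _ => Iff.rfl,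
    ⟨isoSelfExp⟩⟩
end

section
/- The projections π∞ i : D∞ → D i, σ ↦ σ i, are Scott continuous and satisfy π i j ∘ π∞ j = π∞ i whenever i ≤ j; moreover D∞ with these projections is the limit of the diagram of projections: for every partial order E that is a dcpo and every family of Scott-continuous functions f i : E → D i satisfying π i j ∘ f j = f i whenever i ≤ j, the map f∞ : E → D∞ sending y to the family i ↦ f i y is well defined (its values satisfy the compatibility condition), is Scott continuous, satisfies π∞ i ∘ f∞ = f i for every i, and is the unique Scott-continuous function with this last property. -/
/-- The limit `D∞` of a system of projections: dependent functions `σ : Π i, D i`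
with `π i j h (σ j) = σ i` whenever `i ≤ j`, ordered pointwise (as a subtype of `Π i, D i`). -/
abbrev Dinf {I : Type*} [Preorder I] (D : I → Type*) [∀ i, PartialOrder (D i)]
    (π : ∀ i j : I, i ≤ j → D j → D i) : Type _ :=
  {σ : ∀ i, D i // ∀ (i j : I) (h : i ≤ j), π i j h (σ j) = σ i}

/-!
Directed suprema in `D∞` are computed pointwise: the pointwise suprema of a directed set of
threads again form a thread because each `π i j` preserves directed suprema, and this thread is
then the supremum in `D∞`. Hence the projections are Scott continuous, and a cone `f` factors
through `D∞` by `y ↦ (i ↦ f i y)`, which is Scott continuous because its components are and is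
the only factorisation since an element of `D∞` is determined by its components.
-/

section SubtypePi

variable {ι : Type*} {α : ι → Type*} [∀ i, Preorder (α i)] {p : (∀ i, α i) → Prop}

theorem isLUB_subtype_pi_of_forall_isLUB_eval {d : Set {x : ∀ i, α i // p x}}
    {a : {x : ∀ i, α i // p x}} (h : ∀ i, IsLUB ((fun σ => σ.1 i) '' d) (a.1 i)) :
    IsLUB d a :=
  ⟨fun _ hx i => (h i).1 ⟨_, hx, rfl⟩,
    fun _ hb i => (h i).2 <| by rintro _ ⟨x, hx, rfl⟩; exact hb hx i⟩

theorem scottContinuous_subtype_pi_mk {E : Type*} [Preorder E] {f : ∀ i, E → α i}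
    (hf : ∀ i, ScottContinuous (f i)) (hp : ∀ y, p fun i => f i y) :
    ScottContinuous fun y => (⟨fun i => f i y, hp y⟩ : {x : ∀ i, α i // p x}) := by
  intro d hne hdir a ha
  refine isLUB_subtype_pi_of_forall_isLUB_eval fun i => ?_
  rw [Set.image_image]
  exact hf i hne hdir ha

end SubtypePi

namespace Dinf

variable {I : Type*} [Preorder I] {D : I → Type*} [∀ i, PartialOrder (D i)]
  {π : ∀ i j : I, i ≤ j → D j → D i}

theorem directedOn_image_eval {d : Set (Dinf D π)} (hdir : DirectedOn (· ≤ ·) d) (i : I) :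
    DirectedOn (· ≤ ·) ((fun σ : Dinf D π => σ.1 i) '' d) :=
  hdir.mono_comp fun _ _ h => h i

theorem exists_isLUB_image_eval (hD : ∀ i, IsDcpo (D i))
    (hπc : ∀ (i j : I) (h : i ≤ j), ScottContinuous (π i j h))
    {d : Set (Dinf D π)} (hne : d.Nonempty) (hdir : DirectedOn (· ≤ ·) d) :
    ∃ σ : Dinf D π, ∀ i, IsLUB ((fun τ : Dinf D π => τ.1 i) '' d) (σ.1 i) := by
  choose s hs using fun i => hD i _ (hne.image _) (directedOn_image_eval hdir i)
  have hthread : ∀ (i j : I) (h : i ≤ j), π i j h (s j) = s i := by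
    intro i j h
    have hπs := hπc i j h (hne.image _) (directedOn_image_eval hdir j) (hs j)
    have himage : π i j h '' ((fun τ : Dinf D π => τ.1 j) '' d) = (fun τ => τ.1 i) '' d := by
      rw [Set.image_image]
      exact Set.image_congr fun τ _ => τ.2 i j h
    exact (himage ▸ hπs).unique (hs i)
  exact ⟨⟨s, hthread⟩, hs⟩

theorem isLUB_image_eval (hD : ∀ i, IsDcpo (D i))
    (hπc : ∀ (i j : I) (h : i ≤ j), ScottContinuous (π i j h))
    {d : Set (Dinf D π)} (hne : d.Nonempty) (hdir : DirectedOn (· ≤ ·) d) {a : Dinf D π}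
    (ha : IsLUB d a) (i : I) : IsLUB ((fun σ : Dinf D π => σ.1 i) '' d) (a.1 i) := by
  obtain ⟨σ, hσ⟩ := exists_isLUB_image_eval hD hπc hne hdir
  rw [ha.unique (isLUB_subtype_pi_of_forall_isLUB_eval hσ)]
  exact hσ i

end Dinf

theorem Dinf_is_limit_general {I : Type*} [Preorder I] {D : I → Type*} [∀ i, PartialOrder (D i)]
    (hD : ∀ i, IsDcpo (D i))
    (π : ∀ i j : I, i ≤ j → D j → D i)
    (hπc : ∀ (i j : I) (h : i ≤ j), ScottContinuous (π i j h)) :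
    (∀ i : I, ScottContinuous (fun σ : Dinf D π => σ.1 i)) ∧
    (∀ (i j : I) (h : i ≤ j),
      (π i j h ∘ fun σ : Dinf D π => σ.1 j) = fun σ : Dinf D π => σ.1 i) ∧
    (∀ (E : Type*) [PartialOrder E], IsDcpo E →
      ∀ f : ∀ i : I, E → D i, (∀ i, ScottContinuous (f i)) →
        (∀ (i j : I) (h : i ≤ j), π i j h ∘ f j = f i) →
        (∀ (y : E) (i j : I) (h : i ≤ j), π i j h (f j y) = f i y) ∧
        (∃! g : E → Dinf D π, ScottContinuous g ∧
          ∀ i : I, (fun σ : Dinf D π => σ.1 i) ∘ g = f i) ∧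
        (∀ g : E → Dinf D π,
          (ScottContinuous g ∧ ∀ i : I, (fun σ : Dinf D π => σ.1 i) ∘ g = f i) →
          ∀ (y : E) (i : I), (g y).1 i = f i y)) := by
  refine ⟨fun i _ hne hdir _ ha => Dinf.isLUB_image_eval hD hπc hne hdir ha i,
    fun i j h => funext fun σ => σ.2 i j h, ?_⟩
  intro E _ _ f hf hπf
  have hthread : ∀ (y : E) (i j : I) (h : i ≤ j), π i j h (f j y) = f i y :=
    fun y i j h => congrFun (hπf i j h) y
  refine ⟨hthread, ⟨fun y => ⟨fun i => f i y, fun i j h => hthread y i j h⟩,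
    ⟨scottContinuous_subtype_pi_mk hf _, fun _ => rfl⟩, ?_⟩, ?_⟩
  · rintro g ⟨-, hg⟩
    funext y
    exact Subtype.ext <| funext fun i => congrFun (hg i) y
  · rintro g ⟨-, hg⟩ y i
    exact congrFun (hg i) y

/-- The projections `π∞ i : D∞ → D i` are Scott continuous, compatible with the
projections of the diagram, and exhibit `D∞` as the limit of the diagram: every dcpo `E`
with a compatible family of Scott-continuous maps `f i : E → D i` admits a unique
Scott-continuous `f∞ : E → D∞` with `π∞ i ∘ f∞ = f i`; moreover `f∞ y = (fun i => f i y)`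
is well defined (its values satisfy the compatibility condition). -/
theorem Dinf_is_limit {I : Type*} [Preorder I] {D : I → Type*} [∀ i, PartialOrder (D i)]
    (hD : ∀ i, IsDcpo (D i))
    (ε : ∀ i j : I, i ≤ j → D i → D j) (π : ∀ i j : I, i ≤ j → D j → D i)
    (hεc : ∀ (i j : I) (h : i ≤ j), ScottContinuous (ε i j h))
    (hπc : ∀ (i j : I) (h : i ≤ j), ScottContinuous (π i j h))
    (hsec : ∀ (i j : I) (h : i ≤ j) (x : D i), π i j h (ε i j h x) = x)
    (hdefl : ∀ (i j : I) (h : i ≤ j) (y : D j), ε i j h (π i j h y) ≤ y)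
    (hεid : ∀ (i : I) (h : i ≤ i), ε i i h = id)
    (hπid : ∀ (i : I) (h : i ≤ i), π i i h = id)
    (hεcomp : ∀ (i j k : I) (hij : i ≤ j) (hjk : j ≤ k),
      ε i k (hij.trans hjk) = ε j k hjk ∘ ε i j hij)
    (hπcomp : ∀ (i j k : I) (hij : i ≤ j) (hjk : j ≤ k),
      π i k (hij.trans hjk) = π i j hij ∘ π j k hjk) :
    (∀ i : I, ScottContinuous (fun σ : Dinf D π => σ.1 i)) ∧
    (∀ (i j : I) (h : i ≤ j),
      (π i j h ∘ fun σ : Dinf D π => σ.1 j) = fun σ : Dinf D π => σ.1 i) ∧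
    (∀ (E : Type*) [PartialOrder E], IsDcpo E →
      ∀ f : ∀ i : I, E → D i, (∀ i, ScottContinuous (f i)) →
        (∀ (i j : I) (h : i ≤ j), π i j h ∘ f j = f i) →
        (∀ (y : E) (i j : I) (h : i ≤ j), π i j h (f j y) = f i y) ∧
        (∃! g : E → Dinf D π, ScottContinuous g ∧
          ∀ i : I, (fun σ : Dinf D π => σ.1 i) ∘ g = f i) ∧
        (∀ g : E → Dinf D π,
          (ScottContinuous g ∧ ∀ i : I, (fun σ : Dinf D π => σ.1 i) ∘ g = f i) →
          ∀ (y : E) (i : I), (g y).1 i = f i y)) :=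
  Dinf_is_limit_general hD π hπc
end

section
/- Assume in addition that I is nonempty and directed (any two elements of I have a common upper bound). Then there exists a family of Scott-continuous functions ε∞ i : D i → D∞ such that: (1) for every i, the pair (ε∞ i, π∞ i) is an embedding-projection pair from D i to D∞, where π∞ i : D∞ → D i is the projection σ ↦ σ i; (2) ε∞ j ∘ ε i j = ε∞ i whenever i ≤ j; and (3) D∞ with the maps ε∞ i is the colimit of the diagram of embeddings: for every partial order E that is a dcpo and every family of Scott-continuous functions g i : D i → E satisfying g j ∘ ε i j = g i whenever i ≤ j, there is a unique Scott-continuous function g∞ : D∞ → E with g∞ ∘ ε∞ i = g i for every i. -/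
/-! The embedding `ε∞ i` sends `x` to the thread whose `j`-th component is `π j k (ε i k x)`
for any common upper bound `k` of `i` and `j`; the composition laws make this independent of
`k`. Directed suprema in `D∞` are computed componentwise, because each `D i` is a dcpo and the
projections `π i j` are Scott continuous. Every thread `σ` is the directed supremum of its
approximations `ε∞ i (σ i)`, so a Scott-continuous `g∞` with `g∞ ∘ ε∞ i = g i` must send `σ`
to `⨆ i, g i (σ i)`; conversely this supremum exists in `E` and defines such a map. -/

open Set

namespace Dinf

variable {I : Type*} [Preorder I] {D : I → Type*}
  {ε : ∀ i j : I, i ≤ j → D i → D j} {π : ∀ i j : I, i ≤ j → D j → D i}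

variable (ε π) in
structure IsRetractSystem : Prop where
  π_ε : ∀ (i j : I) (h : i ≤ j) (x : D i), π i j h (ε i j h x) = x
  ε_trans : ∀ (i j k : I) (hij : i ≤ j) (hjk : j ≤ k),
    ε i k (hij.trans hjk) = ε j k hjk ∘ ε i j hij
  π_trans : ∀ (i j k : I) (hij : i ≤ j) (hjk : j ≤ k),
    π i k (hij.trans hjk) = π i j hij ∘ π j k hjk

theorem IsRetractSystem.π_ε_eq_of_le (hc : IsRetractSystem ε π) {i j k m : I} (hik : i ≤ k)
    (hjk : j ≤ k) (hkm : k ≤ m) (x : D i) :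
    π j m (hjk.trans hkm) (ε i m (hik.trans hkm) x) = π j k hjk (ε i k hik x) := by
  rw [hc.π_trans j k m hjk hkm, hc.ε_trans i k m hik hkm, Function.comp_apply,
    Function.comp_apply, hc.π_ε]

section Directed

variable [IsDirectedOrder I]

variable (ε π) in
noncomputable def link (i j : I) : D i → D j :=
  π j _ (exists_ge_ge i j).choose_spec.2 ∘ ε i _ (exists_ge_ge i j).choose_spec.1

theorem link_eq (hc : IsRetractSystem ε π) {i j k : I} (hik : i ≤ k) (hjk : j ≤ k) (x : D i) :
    link ε π i j x = π j k hjk (ε i k hik x) := by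
  obtain ⟨hic, hjc⟩ := (exists_ge_ge i j).choose_spec
  obtain ⟨m, hkm, hcm⟩ := exists_ge_ge k (exists_ge_ge i j).choose
  rw [← hc.π_ε_eq_of_le hik hjk hkm, hc.π_ε_eq_of_le hic hjc hcm]
  rfl

theorem π_link (hc : IsRetractSystem ε π) (i : I) (x : D i) (j j' : I) (h : j ≤ j') :
    π j j' h (link ε π i j' x) = link ε π i j x := by
  obtain ⟨k, hik, hj'k⟩ := exists_ge_ge i j'
  rw [link_eq hc hik hj'k, link_eq hc hik (h.trans hj'k),
    hc.π_trans j j' k h hj'k, Function.comp_apply]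

end Directed

variable [∀ i, PartialOrder (D i)]

theorem monotone_apply_proj {E : Type*} [Preorder E] {g : ∀ i, D i → E}
    (hgm : ∀ i, Monotone (g i)) (hg : ∀ (i j : I) (h : i ≤ j), g j ∘ ε i j h = g i)
    (hdefl : ∀ (i j : I) (h : i ≤ j) (y : D j), ε i j h (π i j h y) ≤ y) (σ : Dinf D π) :
    Monotone fun i => g i (σ.1 i) := by
  intro i k hik
  calc g i (σ.1 i) = g k (ε i k hik (π i k hik (σ.1 k))) := by
        rw [σ.2 i k hik, ← hg i k hik, Function.comp_apply]
    _ ≤ g k (σ.1 k) := hgm k (hdefl i k hik _)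

theorem isLUB_val_of_isLUB (hD : ∀ i, IsDcpo (D i))
    (hπc : ∀ (i j : I) (h : i ≤ j), ScottContinuous (π i j h))
    {d : Set (Dinf D π)} (hne : d.Nonempty) (hdir : DirectedOn (· ≤ ·) d) {σ : Dinf D π}
    (hσ : IsLUB d σ) : IsLUB (Subtype.val '' d) σ.1 := by
  have hne' (i : I) : (Function.eval i '' (Subtype.val '' d)).Nonempty := (hne.image _).image _
  have hdir' (i : I) : DirectedOn (· ≤ ·) (Function.eval i '' (Subtype.val '' d)) :=
    (hdir.mono_comp (Subtype.mono_coe _)).mono_comp (Function.monotone_eval i)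
  choose ρ hρ using fun i => hD i _ (hne' i) (hdir' i)
  have hρπ (i j : I) (h : i ≤ j) : π i j h (ρ j) = ρ i := by
    refine (hπc i j h (hne' j) (hdir' j) (hρ j)).unique ?_
    rw [image_image, image_image]
    simpa only [image_image, Function.eval, fun τ : Dinf D π => τ.2 i j h] using hρ i
  obtain rfl : σ = ⟨ρ, hρπ⟩ :=
    hσ.unique (.of_image (f := Subtype.val) Iff.rfl (isLUB_pi.2 hρ))
  exact isLUB_pi.2 hρ

theorem scottContinuous_proj (hD : ∀ i, IsDcpo (D i))
    (hπc : ∀ (i j : I) (h : i ≤ j), ScottContinuous (π i j h)) (i : I) :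
    ScottContinuous fun σ : Dinf D π => σ.1 i := by
  intro d hne hdir σ hσ
  simpa only [image_image] using isLUB_pi.1 (isLUB_val_of_isLUB hD hπc hne hdir hσ) i

theorem scottContinuous_of_isLUB (hD : ∀ i, IsDcpo (D i))
    (hπc : ∀ (i j : I) (h : i ≤ j), ScottContinuous (π i j h))
    {E : Type*} [Preorder E] {g : ∀ i, D i → E} (hgc : ∀ i, ScottContinuous (g i))
    {f : Dinf D π → E} (hf : ∀ σ, IsLUB (range fun i => g i (σ.1 i)) (f σ)) :
    ScottContinuous f := by
  have hmono : Monotone f := fun σ τ hστ => (hf σ).2 <| forall_mem_range.2 fun i =>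
    ((hgc i).monotone (hστ i)).trans ((hf τ).1 (mem_range_self i))
  intro d hne hdir σ hσ
  refine ⟨hmono.mem_upperBounds_image hσ.1, fun b hb =>
    (hf σ).2 (forall_mem_range.2 fun i => ?_)⟩
  refine (hgc i (hne.image _) (hdir.mono_comp fun _ _ h => h i)
    (scottContinuous_proj hD hπc i hne hdir hσ)).2 ?_
  rintro _ ⟨_, ⟨τ, hτ, rfl⟩, rfl⟩
  exact ((hf τ).1 (mem_range_self i)).trans (hb (mem_image_of_mem f hτ))

section Directed

variable [IsDirectedOrder I]

noncomputable def embed (hc : IsRetractSystem ε π) (i : I) (x : D i) : Dinf D π :=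
  ⟨fun j => link ε π i j x, π_link hc i x⟩

variable (hc : IsRetractSystem ε π)

theorem embed_apply_self (i : I) (x : D i) : (embed hc i x).1 i = x := by
  obtain ⟨k, hik, -⟩ := exists_ge_ge i i
  exact (link_eq hc hik hik x).trans (hc.π_ε i k hik x)

theorem embed_ε (i j : I) (h : i ≤ j) (x : D i) :
    embed hc j (ε i j h x) = embed hc i x := by
  refine Subtype.ext (funext fun l => ?_)
  obtain ⟨k, hjk, hlk⟩ := exists_ge_ge j l
  change link ε π j l _ = link ε π i l x
  rw [link_eq hc hjk hlk, link_eq hc (h.trans hjk) hlk,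
    hc.ε_trans i j k h hjk, Function.comp_apply]

theorem embed_apply_of_le {i k : I} (h : i ≤ k) (x : D i) :
    (embed hc i x).1 k = ε i k h x := by
  rw [← embed_ε hc i k h, embed_apply_self]

theorem embed_proj_le
    (hdefl : ∀ (i j : I) (h : i ≤ j) (y : D j), ε i j h (π i j h y) ≤ y)
    (hπm : ∀ (i j : I) (h : i ≤ j), Monotone (π i j h)) (i : I) (σ : Dinf D π) :
    embed hc i (σ.1 i) ≤ σ := by
  intro j
  obtain ⟨k, hik, hjk⟩ := exists_ge_ge i j
  calc link ε π i j (σ.1 i) = π j k hjk (ε i k hik (π i k hik (σ.1 k))) := by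
        rw [link_eq hc hik hjk, σ.2 i k hik]
    _ ≤ π j k hjk (σ.1 k) := hπm j k hjk (hdefl i k hik _)
    _ = σ.1 j := σ.2 j k hjk

theorem scottContinuous_link (hεc : ∀ (i j : I) (h : i ≤ j), ScottContinuous (ε i j h))
    (hπc : ∀ (i j : I) (h : i ≤ j), ScottContinuous (π i j h)) (i j : I) :
    ScottContinuous (link ε π i j) :=
  (hεc _ _ _).comp (hπc _ _ _)

theorem scottContinuous_embed (hεc : ∀ (i j : I) (h : i ≤ j), ScottContinuous (ε i j h))
    (hπc : ∀ (i j : I) (h : i ≤ j), ScottContinuous (π i j h)) (i : I) :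
    ScottContinuous (embed hc i) := by
  intro d hne hdir x hx
  refine .of_image (f := Subtype.val) Iff.rfl (isLUB_pi.2 fun j => ?_)
  rw [image_image, image_image]
  exact scottContinuous_link hεc hπc i j hne hdir hx

theorem isLUB_range_embed_proj
    (hdefl : ∀ (i j : I) (h : i ≤ j) (y : D j), ε i j h (π i j h y) ≤ y)
    (hπm : ∀ (i j : I) (h : i ≤ j), Monotone (π i j h)) (σ : Dinf D π) :
    IsLUB (range fun i => embed hc i (σ.1 i)) σ := by
  refine ⟨forall_mem_range.2 (embed_proj_le hc hdefl hπm · σ), fun τ hτ i => ?_⟩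
  rw [← embed_apply_self hc i (σ.1 i)]
  exact hτ (mem_range_self i) i

theorem isLUB_range_of_scottContinuous [Nonempty I]
    (hεc : ∀ (i j : I) (h : i ≤ j), ScottContinuous (ε i j h))
    (hπc : ∀ (i j : I) (h : i ≤ j), ScottContinuous (π i j h))
    (hdefl : ∀ (i j : I) (h : i ≤ j) (y : D j), ε i j h (π i j h y) ≤ y)
    {E : Type*} [Preorder E] {g : ∀ i, D i → E} {f : Dinf D π → E} (hfc : ScottContinuous f)
    (hfg : ∀ i, f ∘ embed hc i = g i) (σ : Dinf D π) :
    IsLUB (range fun i => g i (σ.1 i)) (f σ) := by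
  have hπm (i j : I) (h : i ≤ j) := (hπc i j h).monotone
  have hmono : Monotone fun i => embed hc i (σ.1 i) :=
    monotone_apply_proj (fun i => (scottContinuous_embed hc hεc hπc i).monotone)
      (fun i j h => funext (embed_ε hc i j h)) hdefl σ
  have hfσ := hfc (range_nonempty _) (directedOn_range.2 hmono.directed_le)
    (isLUB_range_embed_proj hc hdefl hπm σ)
  rwa [← range_comp, show (f ∘ fun i => embed hc i (σ.1 i)) = _ from
    funext fun i => congrFun (hfg i) (σ.1 i)] at hfσ

theorem comp_embed_of_isLUB
    (hdefl : ∀ (i j : I) (h : i ≤ j) (y : D j), ε i j h (π i j h y) ≤ y)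
    {E : Type*} [PartialOrder E] {g : ∀ i, D i → E} (hgm : ∀ i, Monotone (g i))
    (hg : ∀ (i j : I) (h : i ≤ j), g j ∘ ε i j h = g i)
    {f : Dinf D π → E} (hf : ∀ σ, IsLUB (range fun i => g i (σ.1 i)) (f σ)) (i : I) :
    f ∘ embed hc i = g i := by
  funext x
  refine (hf _).unique (IsGreatest.isLUB ⟨⟨i, congrArg (g i) (embed_apply_self hc i x)⟩,
    forall_mem_range.2 fun j => ?_⟩)
  obtain ⟨k, hik, hjk⟩ := exists_ge_ge i j
  calc g j ((embed hc i x).1 j)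
      ≤ g k ((embed hc i x).1 k) := monotone_apply_proj hgm hg hdefl _ hjk
    _ = g i x := by rw [embed_apply_of_le hc hik, ← hg i k hik, Function.comp_apply]

end Directed

end Dinf

open Dinf

theorem Dinf_is_colimit_general {I : Type*} [Preorder I] {D : I → Type*} [∀ i, PartialOrder (D i)]
    (hI : Nonempty I) (hIdir : ∀ i j : I, ∃ k : I, i ≤ k ∧ j ≤ k)
    (hD : ∀ i, IsDcpo (D i))
    (ε : ∀ i j : I, i ≤ j → D i → D j) (π : ∀ i j : I, i ≤ j → D j → D i)
    (hεc : ∀ (i j : I) (h : i ≤ j), ScottContinuous (ε i j h))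
    (hπc : ∀ (i j : I) (h : i ≤ j), ScottContinuous (π i j h))
    (hsec : ∀ (i j : I) (h : i ≤ j) (x : D i), π i j h (ε i j h x) = x)
    (hdefl : ∀ (i j : I) (h : i ≤ j) (y : D j), ε i j h (π i j h y) ≤ y)
    (hεcomp : ∀ (i j k : I) (hij : i ≤ j) (hjk : j ≤ k),
      ε i k (hij.trans hjk) = ε j k hjk ∘ ε i j hij)
    (hπcomp : ∀ (i j k : I) (hij : i ≤ j) (hjk : j ≤ k),
      π i k (hij.trans hjk) = π i j hij ∘ π j k hjk) :
    ∃ εinf : ∀ i : I, D i → Dinf D π,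
      (∀ i : I, ScottContinuous (εinf i)) ∧
      (∀ i : I, ScottContinuous (fun σ : Dinf D π => σ.1 i)) ∧
      (∀ (i : I) (x : D i), (εinf i x).1 i = x) ∧
      (∀ (i : I) (σ : Dinf D π), εinf i (σ.1 i) ≤ σ) ∧
      (∀ (i j : I) (h : i ≤ j), εinf j ∘ ε i j h = εinf i) ∧
      (∀ (E : Type*) [PartialOrder E], IsDcpo E →
        ∀ g : ∀ i : I, D i → E, (∀ i, ScottContinuous (g i)) →
          (∀ (i j : I) (h : i ≤ j), g j ∘ ε i j h = g i) →
          ∃! ginf : Dinf D π → E, ScottContinuous ginf ∧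
            ∀ i : I, ginf ∘ εinf i = g i) := by
  have : IsDirectedOrder I := ⟨hIdir⟩
  have hc : IsRetractSystem ε π := ⟨hsec, hεcomp, hπcomp⟩
  have hπm (i j : I) (h : i ≤ j) := (hπc i j h).monotone
  refine ⟨embed hc, scottContinuous_embed hc hεc hπc, scottContinuous_proj hD hπc,
    embed_apply_self hc, embed_proj_le hc hdefl hπm, fun i j h => funext (embed_ε hc i j h), ?_⟩
  intro E _ hE g hgc hg
  have hgm (i : I) := (hgc i).monotone
  choose f hf using fun σ : Dinf D π => hE _ (range_nonempty _)
    (directedOn_range.2 (monotone_apply_proj hgm hg hdefl σ).directed_le)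
  refine ⟨f, ⟨scottContinuous_of_isLUB hD hπc hgc hf, comp_embed_of_isLUB hc hdefl hgm hg hf⟩,
    fun f' ⟨hf'c, hf'g⟩ => funext fun σ => ?_⟩
  exact (isLUB_range_of_scottContinuous hc hεc hπc hdefl hf'c hf'g σ).unique (hf σ)

/-- If `I` is moreover nonempty and directed, there are Scott-continuous embeddings
`ε∞ i : D i → D∞` such that (1) each `(ε∞ i, π∞ i)` is an embedding-projection pair,
(2) `ε∞ j ∘ ε i j = ε∞ i` whenever `i ≤ j`, and (3) `D∞` with the maps `ε∞ i` is the
colimit of the diagram of embeddings: for every dcpo `E` and compatible family of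
Scott-continuous maps `g i : D i → E` there is a unique Scott-continuous
`g∞ : D∞ → E` with `g∞ ∘ ε∞ i = g i` for every `i`. -/
theorem Dinf_is_colimit {I : Type*} [Preorder I] {D : I → Type*} [∀ i, PartialOrder (D i)]
    (hI : Nonempty I) (hIdir : ∀ i j : I, ∃ k : I, i ≤ k ∧ j ≤ k)
    (hD : ∀ i, IsDcpo (D i))
    (ε : ∀ i j : I, i ≤ j → D i → D j) (π : ∀ i j : I, i ≤ j → D j → D i)
    (hεc : ∀ (i j : I) (h : i ≤ j), ScottContinuous (ε i j h))
    (hπc : ∀ (i j : I) (h : i ≤ j), ScottContinuous (π i j h))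
    (hsec : ∀ (i j : I) (h : i ≤ j) (x : D i), π i j h (ε i j h x) = x)
    (hdefl : ∀ (i j : I) (h : i ≤ j) (y : D j), ε i j h (π i j h y) ≤ y)
    (hεid : ∀ (i : I) (h : i ≤ i), ε i i h = id)
    (hπid : ∀ (i : I) (h : i ≤ i), π i i h = id)
    (hεcomp : ∀ (i j k : I) (hij : i ≤ j) (hjk : j ≤ k),
      ε i k (hij.trans hjk) = ε j k hjk ∘ ε i j hij)
    (hπcomp : ∀ (i j k : I) (hij : i ≤ j) (hjk : j ≤ k),
      π i k (hij.trans hjk) = π i j hij ∘ π j k hjk) :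
    ∃ εinf : ∀ i : I, D i → Dinf D π,
      (∀ i : I, ScottContinuous (εinf i)) ∧
      (∀ i : I, ScottContinuous (fun σ : Dinf D π => σ.1 i)) ∧
      (∀ (i : I) (x : D i), (εinf i x).1 i = x) ∧
      (∀ (i : I) (σ : Dinf D π), εinf i (σ.1 i) ≤ σ) ∧
      (∀ (i j : I) (h : i ≤ j), εinf j ∘ ε i j h = εinf i) ∧
      (∀ (E : Type*) [PartialOrder E], IsDcpo E →
        ∀ g : ∀ i : I, D i → E, (∀ i, ScottContinuous (g i)) →
          (∀ (i j : I) (h : i ≤ j), g j ∘ ε i j h = g i) →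
          ∃! ginf : Dinf D π → E, ScottContinuous ginf ∧
            ∀ i : I, ginf ∘ εinf i = g i) :=
  Dinf_is_colimit_general hI hIdir hD ε π hεc hπc hsec hdefl hεcomp hπcomp
end

section
/- The lifting Part X is the free pointed dcpo on a type X: let X be a type and let D be a partial order that is a dcpo and has a least element ⊥. For every function f : X → D there is a unique function f' : Part X → D such that f' is Scott continuous, f' Part.none = ⊥, and f' (Part.some x) = f x for every x : X. Here Part X carries its usual partial order: a ≤ b iff every value of a is a value of b. -/
namespace Part

variable {X D : Type*}

theorem eq_of_le_of_dom {a b : Part X} (hab : b ≤ a) (hb : b.Dom) : b = a := by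
  obtain ⟨x, rfl⟩ : ∃ x, b = some x := ⟨b.get hb, eq_some_iff.mpr (get_mem hb)⟩
  exact (eq_some_iff.mpr (hab x (mem_some x))).symm

theorem isLUB_mem {d : Set (Part X)} {a : Part X} (hne : d.Nonempty) (ha : IsLUB d a) :
    a ∈ d := by
  by_cases hdom : ∃ b ∈ d, b.Dom
  · obtain ⟨b, hbd, hb⟩ := hdom
    rwa [← eq_of_le_of_dom (ha.1 hbd) hb]
  · push Not at hdom
    have hnone : a = none :=
      le_bot_iff.mp (ha.2 fun b hb => (eq_none_iff'.mpr (hdom b hb)).le)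
    obtain ⟨b, hbd⟩ := hne
    rwa [hnone, ← eq_none_iff'.mpr (hdom b hbd)]

theorem scottContinuous_of_monotone [Preorder D] {g : Part X → D} (hg : Monotone g) :
    ScottContinuous g := fun _ hne _ _ ha =>
  (hg.map_isGreatest ⟨isLUB_mem hne ha, ha.1⟩).isLUB

theorem funext_none_some {g h : Part X → D} (hnone : g none = h none)
    (hsome : ∀ x, g (some x) = h (some x)) : g = h := by
  funext a
  obtain rfl | ⟨x, rfl⟩ := eq_none_or_eq_some a
  exacts [hnone, hsome x]

open Classical in
noncomputable def extendBot (f : X → D) (bot : D) (a : Part X) : D :=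
  if h : a.Dom then f (a.get h) else bot

@[simp]
theorem extendBot_none (f : X → D) (bot : D) : extendBot f bot none = bot :=
  dif_neg not_none_dom

@[simp]
theorem extendBot_some (f : X → D) (bot : D) (x : X) : extendBot f bot (some x) = f x :=
  dif_pos trivial

theorem monotone_extendBot [Preorder D] (f : X → D) {bot : D} (hbot : ∀ y : D, bot ≤ y) :
    Monotone (extendBot f bot) := by
  intro b a hba
  by_cases hb : b.Dom
  · rw [eq_of_le_of_dom hba hb]
  · rw [eq_none_iff'.mpr hb, extendBot_none]
    exact hbot _

end Part

theorem part_is_free_pointed_dcpo_general {X : Type*} {D : Type*} [PartialOrder D]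
    (bot : D) (hbot : ∀ x : D, bot ≤ x) (f : X → D) :
    ∃! f' : Part X → D, ScottContinuous f' ∧ f' Part.none = bot ∧
      ∀ x : X, f' (Part.some x) = f x := by
  refine ⟨Part.extendBot f bot,
    ⟨Part.scottContinuous_of_monotone (Part.monotone_extendBot f hbot),
      Part.extendBot_none f bot, Part.extendBot_some f bot⟩, ?_⟩
  rintro g ⟨-, hnone, hsome⟩
  exact Part.funext_none_some (by rw [hnone, Part.extendBot_none])
    fun x => by rw [hsome, Part.extendBot_some]

/-- The lifting `Part X` is the free pointed dcpo on the type `X`: for every dcpo `D` with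
least element `bot` and every `f : X → D`, there is a unique Scott-continuous
`f' : Part X → D` with `f' Part.none = bot` and `f' (Part.some x) = f x` for all `x`. -/
theorem part_is_free_pointed_dcpo {X : Type*} {D : Type*} [PartialOrder D]
    (hD : IsDcpo D) (bot : D) (hbot : ∀ x : D, bot ≤ x) (f : X → D) :
    ∃! f' : Part X → D, ScottContinuous f' ∧ f' Part.none = bot ∧
      ∀ x : X, f' (Part.some x) = f x :=
  part_is_free_pointed_dcpo_general bot hbot f
end

section
/- The rounded ideal completion of a poset is the free dcpo on it: let P be a partial order (so that ≤ on P is reflexive and transitive and hence an abstract basis), and let D be a partial order that is a dcpo. For every monotone function f : P → D there is a unique Scott-continuous function f' : Idl(P, ≤) → D such that f' (↓x) = f x for every x : P, where ↓x = {y : P | y ≤ x} is the principal ideal of x. -/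
/-- An ideal for a relation `r`: a nonempty, `r`-directed lower subset. -/
def IsIdeal {B : Type*} (r : B → B → Prop) (I : Set B) : Prop :=
  I.Nonempty ∧ DirectedOn r I ∧ ∀ x y : B, r x y → y ∈ I → x ∈ I

/-- The rounded ideal completion of `(B, r)`: the ideals of `r`, ordered by inclusion
(as a subtype of `Set B`). -/
abbrev Idl {B : Type*} (r : B → B → Prop) : Type _ := {I : Set B // IsIdeal r I}

/-- The principal ideal `↓x = {y | y ≤ x}` of an element of a partial order,
as an element of `Idl (· ≤ ·)`. -/
def principalIdeal {P : Type*} [PartialOrder P] (x : P) : Idl ((· ≤ ·) : P → P → Prop) :=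
  ⟨{y : P | y ≤ x},
    ⟨x, le_refl x⟩,
    fun a ha b hb => ⟨x, le_refl x, ha, hb⟩,
    fun a b hab hb => le_trans hab hb⟩

/-!
The extension sends an ideal `I` to the supremum of `f '' I`, which exists because `f '' I`
is directed. Directed suprema in `Idl` are unions, so this extension is Scott continuous. It is
the only one: every ideal is the directed supremum of the principal ideals of its elements, so
a Scott-continuous map agreeing with `f` on principal ideals must send `I` to `sup (f '' I)`.
-/

namespace Idl

variable {B : Type*} {r : B → B → Prop}

theorem isIdeal_biUnion {d : Set (Idl r)} (hne : d.Nonempty) (hdir : DirectedOn (· ≤ ·) d) :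
    IsIdeal r (⋃ I ∈ d, I.1) := by
  obtain ⟨I₀, hI₀⟩ := hne
  refine ⟨?_, ?_, ?_⟩
  · obtain ⟨x, hx⟩ := I₀.2.1
    exact ⟨x, Set.mem_biUnion hI₀ hx⟩
  · simp only [DirectedOn, Set.mem_iUnion₂]
    rintro x ⟨I, hI, hxI⟩ y ⟨J, hJ, hyJ⟩
    obtain ⟨K, hK, hIK, hJK⟩ := hdir I hI J hJ
    obtain ⟨z, hz, hxz, hyz⟩ := K.2.2.1 x (hIK hxI) y (hJK hyJ)
    exact ⟨z, ⟨K, hK, hz⟩, hxz, hyz⟩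
  · simp only [Set.mem_iUnion₂]
    rintro x y hxy ⟨I, hI, hyI⟩
    exact ⟨I, hI, I.2.2.2 x y hxy hyI⟩

theorem coe_eq_biUnion_of_isLUB {d : Set (Idl r)} (hne : d.Nonempty)
    (hdir : DirectedOn (· ≤ ·) d) {A : Idl r} (hA : IsLUB d A) : A.1 = ⋃ I ∈ d, I.1 := by
  refine le_antisymm ?_ (Set.iUnion₂_subset fun I hI => hA.1 hI)
  have hub : (⟨_, isIdeal_biUnion hne hdir⟩ : Idl r) ∈ upperBounds d :=
    fun _ hI => Set.subset_biUnion_of_mem hI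
  exact hA.2 hub

variable {D : Type*} [Preorder D]

theorem scottContinuous_of_isLUB_image {f : B → D} {g : Idl r → D}
    (hg : ∀ I, IsLUB (f '' I.1) (g I)) : ScottContinuous g := by
  intro d hne hdir A hA
  refine ⟨?_, fun b hb => (hg A).2 ?_⟩
  · rintro _ ⟨I, hI, rfl⟩
    exact (hg I).mono (hg A) (Set.image_mono (hA.1 hI))
  · rintro _ ⟨x, hx, rfl⟩
    rw [coe_eq_biUnion_of_isLUB hne hdir hA, Set.mem_iUnion₂] at hx
    obtain ⟨I, hI, hxI⟩ := hx
    exact ((hg I).1 ⟨x, hxI, rfl⟩).trans (hb ⟨I, hI, rfl⟩)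

variable {f : B → D}

theorem exists_isLUB_image (hD : IsDcpo D) (hf : ∀ ⦃x y⦄, r x y → f x ≤ f y) (I : Idl r) :
    ∃ a, IsLUB (f '' I.1) a :=
  hD _ (I.2.1.image f) (I.2.2.1.mono_comp hf)

variable (hD : IsDcpo D) (hf : ∀ ⦃x y⦄, r x y → f x ≤ f y)

noncomputable def extend (I : Idl r) : D :=
  (exists_isLUB_image hD hf I).choose

theorem isLUB_extend (I : Idl r) : IsLUB (f '' I.1) (extend hD hf I) :=
  (exists_isLUB_image hD hf I).choose_spec

end Idl

section Poset

variable {P : Type*} [PartialOrder P]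

theorem principalIdeal_mono : Monotone (principalIdeal : P → Idl ((· ≤ ·) : P → P → Prop)) :=
  fun _ _ hxy _ hz => le_trans hz hxy

theorem isLUB_image_principalIdeal (I : Idl ((· ≤ ·) : P → P → Prop)) :
    IsLUB (principalIdeal '' I.1) I :=
  ⟨by rintro _ ⟨x, hx, rfl⟩ y hy; exact I.2.2.2 y x hy hx,
    fun _ hJ x hx => hJ ⟨x, hx, rfl⟩ le_rfl⟩

theorem ScottContinuous.isLUB_image_comp_principalIdeal {D : Type*} [Preorder D]
    {h : Idl ((· ≤ ·) : P → P → Prop) → D} (hh : ScottContinuous h)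
    (I : Idl ((· ≤ ·) : P → P → Prop)) : IsLUB ((h ∘ principalIdeal) '' I.1) (h I) := by
  rw [Set.image_comp]
  exact hh (I.2.1.image _) (I.2.2.1.mono_comp principalIdeal_mono) (isLUB_image_principalIdeal I)

theorem Monotone.isLUB_image_principalIdeal {D : Type*} [Preorder D] {f : P → D}
    (hf : Monotone f) (x : P) : IsLUB (f '' (principalIdeal x).1) (f x) :=
  (hf.map_isGreatest isGreatest_Iic).isLUB

end Poset

/-- The rounded ideal completion of a poset is the free dcpo on it: for every dcpo `D`
and monotone `f : P → D` there is a unique Scott-continuous `f' : Idl(P, ≤) → D` with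
`f' (↓x) = f x` for every `x : P`. -/
theorem idl_is_free_dcpo_on_poset {P : Type*} [PartialOrder P]
    {D : Type*} [PartialOrder D] (hD : IsDcpo D)
    (f : P → D) (hf : Monotone f) :
    ∃! f' : Idl ((· ≤ ·) : P → P → Prop) → D, ScottContinuous f' ∧
      ∀ x : P, f' (principalIdeal x) = f x := by
  have hext := Idl.isLUB_extend hD hf
  refine ⟨Idl.extend hD hf, ⟨Idl.scottContinuous_of_isLUB_image hext,
    fun x => (hext _).unique (hf.isLUB_image_principalIdeal x)⟩, ?_⟩
  rintro h ⟨hsc, hprin⟩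
  funext I
  have hcomp : h ∘ principalIdeal = f := funext hprin
  exact (hcomp ▸ hsc.isLUB_image_comp_principalIdeal I).unique (hext I)
end

section
/- Every dcpo with a basis is a continuous retract of the rounded ideal completion of its basis order: let D be a partial order that is a dcpo with a basis β : B → D, and define the relation ⊑ᴮ on B by b ⊑ᴮ b' iff β b ≤ β b' (a preorder, hence an abstract basis). Then there exist Scott-continuous functions s : D → Idl(B, ⊑ᴮ) and r : Idl(B, ⊑ᴮ) → D with r (s x) = x for every x : D. -/
/-- `x` is way below `y`. -/
def WayBelow {α : Type*} [Preorder α] (x y : α) : Prop :=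
  ∀ d : Set α, d.Nonempty → DirectedOn (· ≤ ·) d → ∀ a : α, IsLUB d a → y ≤ a →
    ∃ z ∈ d, x ≤ z

/-- `β : B → D` is a basis for the dcpo `D`. -/
def IsBasis {B D : Type*} [Preorder D] (β : B → D) : Prop :=
  ∀ x : D, ∃ d : Set D, d.Nonempty ∧ DirectedOn (· ≤ ·) d ∧ d ⊆ Set.range β ∧
    (∀ y ∈ d, WayBelow y x) ∧ IsLUB d x

/-!
The section `s x := {b | β b ≪ x}` is an ideal whose image under `β` has supremum `x`, by the
basis property; the retraction `r I := sup (β '' I)` exists because `β '' I` is directed, and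
then `r (s x) = x`. Directed suprema of ideals are unions, so continuity of `r` is an interchange
of suprema. For continuity of `s`, if `β b ≪ sup d` then, since `sup d` is also the supremum of
the directed set `⋃ x ∈ d, β '' s x`, `β b` lies below some `β c` with `c ∈ s x`, `x ∈ d`.
-/

section WayBelow

variable {α : Type*} [Preorder α] {x x' y y' : α}

theorem WayBelow.le (h : WayBelow x y) : x ≤ y := by
  obtain ⟨z, hz, hxz⟩ := h {y} (Set.singleton_nonempty y) (directedOn_singleton y) y
    isLUB_singleton le_rfl
  rwa [Set.mem_singleton_iff.mp hz] at hxz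

theorem WayBelow.mono_left (hx : x' ≤ x) (h : WayBelow x y) : WayBelow x' y :=
  fun d hne hdir a ha hya =>
    let ⟨z, hz, hxz⟩ := h d hne hdir a ha hya
    ⟨z, hz, hx.trans hxz⟩

theorem WayBelow.mono_right (h : WayBelow x y) (hy : y ≤ y') : WayBelow x y' :=
  fun d hne hdir a ha hya => h d hne hdir a ha (hy.trans hya)

end WayBelow

theorem isLUB_image_iff_isLUB_biUnion {ι α : Type*} [Preorder α] {s : Set ι} {t : ι → Set α}
    {u : ι → α} (ht : ∀ i ∈ s, IsLUB (t i) (u i)) (a : α) :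
    IsLUB (u '' s) a ↔ IsLUB (⋃ i ∈ s, t i) a := by
  rw [Set.image_eq_range, Set.biUnion_eq_iUnion]
  exact isLUB_iUnion_iff_of_isLUB (fun i : s => ht i.1 i.2) a

section Ideal

variable {B : Type*} {r : B → B → Prop}

theorem isIdeal_sUnion {S : Set (Set B)} (hS : ∀ I ∈ S, IsIdeal r I) (hne : S.Nonempty)
    (hdir : DirectedOn (· ⊆ ·) S) : IsIdeal r (⋃₀ S) := by
  refine ⟨?_, Set.directedOn_sUnion hdir fun I hI => (hS I hI).2.1, ?_⟩
  · obtain ⟨I, hI⟩ := hne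
    obtain ⟨b, hb⟩ := (hS I hI).1
    exact ⟨b, I, hI, hb⟩
  · rintro x y hxy ⟨I, hI, hy⟩
    exact ⟨I, hI, (hS I hI).2.2 x y hxy hy⟩

theorem IsIdeal.directedOn_image {D : Type*} [Preorder D] {f : B → D}
    (hf : ∀ a b, r a b → f a ≤ f b) {I : Set B} (hI : IsIdeal r I) :
    DirectedOn (· ≤ ·) (f '' I) :=
  hI.2.1.mono_comp fun a b => hf a b

namespace Idl

theorem isLUB_sUnion {S : Set (Idl r)} (hne : S.Nonempty) (hdir : DirectedOn (· ≤ ·) S) :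
    IsLUB S ⟨⋃₀ (Subtype.val '' S),
      isIdeal_sUnion (by rintro _ ⟨I, -, rfl⟩; exact I.2) (hne.image _)
        (hdir.mono_comp fun _ _ h => h)⟩ :=
  ⟨fun I hI => Set.subset_sUnion_of_mem ⟨I, hI, rfl⟩,
    fun J hJ => Set.sUnion_subset (by rintro _ ⟨I, hI, rfl⟩; exact hJ hI)⟩

theorem val_eq_sUnion_of_isLUB {S : Set (Idl r)} (hne : S.Nonempty)
    (hdir : DirectedOn (· ≤ ·) S) {K : Idl r} (hK : IsLUB S K) :
    K.1 = ⋃₀ (Subtype.val '' S) :=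
  congrArg Subtype.val (hK.unique (isLUB_sUnion hne hdir))

variable {D : Type*} [PartialOrder D] (hD : IsDcpo D) {f : B → D}
  (hf : ∀ a b, r a b → f a ≤ f b)

noncomputable def lift (I : Idl r) : D :=
  (hD _ (I.2.1.image f) (I.2.directedOn_image hf)).choose

theorem isLUB_lift (I : Idl r) : IsLUB (f '' I.1) (lift hD hf I) :=
  (hD _ (I.2.1.image f) (I.2.directedOn_image hf)).choose_spec

theorem scottContinuous_lift : ScottContinuous (lift hD hf) := by
  intro S hne hdir K hK
  have hK' := isLUB_lift hD hf K
  rw [val_eq_sUnion_of_isLUB hne hdir hK, Set.sUnion_image, Set.image_iUnion₂] at hK'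
  exact (isLUB_image_iff_isLUB_biUnion (fun I _ => isLUB_lift hD hf I) _).2 hK'

end Idl

end Ideal

section Basis

variable {B D : Type*} [PartialOrder D] {β : B → D}

def approximants (β : B → D) (x : D) : Set B := {b | WayBelow (β b) x}

theorem approximants_mono : Monotone (approximants β) :=
  fun _ _ hxy _ hb => WayBelow.mono_right hb hxy

namespace IsBasis

variable (hβ : IsBasis β)
include hβ

theorem isLUB_image_approximants (x : D) : IsLUB (β '' approximants β x) x := by
  obtain ⟨d, -, -, hdβ, hdx, hd⟩ := hβ x
  refine ⟨by rintro _ ⟨b, hb, rfl⟩; exact hb.le, fun u hu => hd.2 fun y hy => ?_⟩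
  obtain ⟨b, rfl⟩ := hdβ hy
  exact hu ⟨b, hdx _ hy, rfl⟩

theorem isIdeal_approximants (x : D) :
    IsIdeal (fun b b' : B => β b ≤ β b') (approximants β x) := by
  obtain ⟨d, hne, hdir, hdβ, hdx, hd⟩ := hβ x
  refine ⟨?_, fun b hb b' hb' => ?_, fun b b' hbb' hb' => WayBelow.mono_left hbb' hb'⟩
  · obtain ⟨y, hy⟩ := hne
    obtain ⟨b, rfl⟩ := hdβ hy
    exact ⟨b, hdx _ hy⟩
  · obtain ⟨z, hz, hbz⟩ := hb d hne hdir x hd le_rfl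
    obtain ⟨z', hz', hbz'⟩ := hb' d hne hdir x hd le_rfl
    obtain ⟨w, hw, hzw, hz'w⟩ := hdir z hz z' hz'
    obtain ⟨c, rfl⟩ := hdβ hw
    exact ⟨c, hdx _ hw, hbz.trans hzw, hbz'.trans hz'w⟩

def approximantsIdeal (x : D) : Idl (fun b b' : B => β b ≤ β b') :=
  ⟨approximants β x, hβ.isIdeal_approximants x⟩

theorem approximantsIdeal_mono : Monotone hβ.approximantsIdeal :=
  fun _ _ hxy => approximants_mono hxy

theorem scottContinuous_approximantsIdeal : ScottContinuous hβ.approximantsIdeal := by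
  intro d hne hdir a ha
  refine ⟨hβ.approximantsIdeal_mono.mem_upperBounds_image ha.1, fun J hJ b hb => ?_⟩
  have hU : IsIdeal (fun b b' : B => β b ≤ β b') (⋃₀ (approximants β '' d)) :=
    isIdeal_sUnion (by rintro _ ⟨x, -, rfl⟩; exact hβ.isIdeal_approximants x) (hne.image _)
      (hdir.mono_comp fun _ _ h => approximants_mono h)
  have hUa : IsLUB (β '' ⋃₀ (approximants β '' d)) a := by
    rw [Set.sUnion_image, Set.image_iUnion₂]
    exact (isLUB_image_iff_isLUB_biUnion (u := id)
      (fun x _ => hβ.isLUB_image_approximants x) a).1 (by rwa [Set.image_id])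
  obtain ⟨_, ⟨c, ⟨_, ⟨x, hx, rfl⟩, hcx⟩, rfl⟩, hbc⟩ :=
    hb _ (hU.1.image β) (hU.directedOn_image fun _ _ h => h) a hUa le_rfl
  exact J.2.2.2 b c hbc (hJ ⟨x, hx, rfl⟩ hcx)

end IsBasis

end Basis

/-- Every dcpo with a basis `β : B → D` is a continuous retract of the rounded ideal
completion of the preorder `b ⊑ᴮ b' ↔ β b ≤ β b'` on `B`: there are Scott-continuous
`s : D → Idl(B, ⊑ᴮ)` and `r : Idl(B, ⊑ᴮ) → D` with `r (s x) = x` for all `x`. -/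
theorem dcpo_with_basis_is_retract_of_idl {B D : Type*} [PartialOrder D]
    (hD : IsDcpo D) (β : B → D) (hβ : IsBasis β) :
    ∃ (s : D → Idl (fun b b' : B => β b ≤ β b'))
      (r : Idl (fun b b' : B => β b ≤ β b') → D),
      ScottContinuous s ∧ ScottContinuous r ∧ ∀ x : D, r (s x) = x :=
  ⟨hβ.approximantsIdeal, Idl.lift hD fun _ _ h => h, hβ.scottContinuous_approximantsIdeal,
    Idl.scottContinuous_lift hD _,
    fun x => (Idl.isLUB_lift hD _ _).unique (hβ.isLUB_image_approximants x)⟩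
end

section
/- Let (B, ≺) be an abstract basis and let I and J be ideals of (B, ≺). Then I is way below J in Idl(B, ≺) if and only if there exists x ∈ J with I ⊆ ↓x. -/
/-!
Directed suprema in `Idl(B, ≺)` are unions. So if `x ∈ J` and `I ⊆ ↓x`, a directed family
whose supremum lies above `J` has a member containing `x`, hence containing `I`.
Conversely, `J` is the directed union of the ideals contained in `↓x` for some `x ∈ J`, and
`I ≪ J` puts `I` inside one of them. Since interpolation is only for one element at a time,
`↓x` itself need not be directed; an ideal inside `↓x` containing a given `y ≺ x` is instead
generated by an interpolating sequence `y ≺ s₁ ≺ s₂ ≺ ⋯ ≺ x`.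
-/

namespace IsIdeal

variable {B : Type*} {r : B → B → Prop} {I : Set B} {x y : B}

lemma setOf_rel_subset (hI : IsIdeal r I) (hx : x ∈ I) : {y | r y x} ⊆ I :=
  fun y hy => hI.2.2 y x hy hx

lemma exists_mem_rel (hI : IsIdeal r I) (hy : y ∈ I) : ∃ x ∈ I, r y x := by
  obtain ⟨x, hx, hyx, -⟩ := hI.2.1 y hy y hy
  exact ⟨x, hx, hyx⟩

lemma setOf_exists_rel_seq [IsTrans B r] {s : ℕ → B} (hs : ∀ n, r (s n) (s (n + 1))) :
    IsIdeal r {z | ∃ n, r z (s n)} := by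
  have hlt : ∀ ⦃m n⦄, m < n → r (s m) (s n) := Nat.rel_of_forall_rel_succ_of_lt r hs
  refine ⟨⟨s 0, 1, hs 0⟩, ?_, ?_⟩
  · rintro z ⟨m, hzm⟩ w ⟨n, hwn⟩
    refine ⟨s (m + n + 1), ⟨m + n + 2, hs _⟩, ?_, ?_⟩
    · exact trans_of r hzm (hlt (by omega))
    · exact trans_of r hwn (hlt (by omega))
  · rintro z w hzw ⟨n, hwn⟩
    exact ⟨n, trans_of r hzw hwn⟩

lemma biUnion_of_directedOn {d : Set (Idl r)} (hne : d.Nonempty)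
    (hdir : DirectedOn (· ≤ ·) d) : IsIdeal r (⋃ K ∈ d, (K : Set B)) := by
  refine ⟨?_, ?_, ?_⟩
  · obtain ⟨K, hK⟩ := hne
    obtain ⟨y, hy⟩ := K.2.1
    exact ⟨y, Set.mem_biUnion hK hy⟩
  · intro u hu v hv
    obtain ⟨K, hK, hu⟩ := Set.mem_iUnion₂.mp hu
    obtain ⟨K', hK', hv⟩ := Set.mem_iUnion₂.mp hv
    obtain ⟨M, hM, hKM, hK'M⟩ := hdir K hK K' hK'
    obtain ⟨w, hw, huw, hvw⟩ := M.2.2.1 u (hKM hu) v (hK'M hv)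
    exact ⟨w, Set.mem_biUnion hM hw, huw, hvw⟩
  · intro u v huv hv
    obtain ⟨K, hK, hv⟩ := Set.mem_iUnion₂.mp hv
    exact Set.mem_biUnion hK (K.2.2.2 u v huv hv)

end IsIdeal

section Interpolation

variable {B : Type*} {r : B → B → Prop} {x y : B}

lemma exists_seq_interpolating (hbin : ∀ x y : B, r x y → ∃ z : B, r x z ∧ r z y)
    (h : r y x) : ∃ s : ℕ → B, s 0 = y ∧ (∀ n, r (s n) (s (n + 1))) ∧ ∀ n, r (s n) x := by
  choose f hf using fun a : {a // r a x} => hbin a x a.2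
  let next : {a // r a x} → {a // r a x} := fun a => ⟨f a, (hf a).2⟩
  refine ⟨fun n => (next^[n] ⟨y, h⟩).1, rfl, fun n => ?_, fun n => (next^[n] ⟨y, h⟩).2⟩
  simpa only [Function.iterate_succ_apply'] using (hf _).1

lemma exists_isIdeal_mem_subset_setOf_rel [IsTrans B r]
    (hbin : ∀ x y : B, r x y → ∃ z : B, r x z ∧ r z y) (h : r y x) :
    ∃ C : Set B, IsIdeal r C ∧ y ∈ C ∧ C ⊆ {z | r z x} := by
  obtain ⟨s, hs0, hs, hsx⟩ := exists_seq_interpolating hbin h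
  refine ⟨{z | ∃ n, r z (s n)}, IsIdeal.setOf_exists_rel_seq hs, ⟨1, hs0 ▸ hs 0⟩, ?_⟩
  rintro z ⟨n, hzn⟩
  exact trans_of r hzn (hsx n)

end Interpolation

namespace Idl

variable {B : Type*} {r : B → B → Prop}

lemma isLUB_of_biUnion_eq {d : Set (Idl r)} {J : Idl r} (h : ⋃ K ∈ d, (K : Set B) = J) :
    IsLUB d J := by
  refine ⟨fun K hK => ?_, fun a ha => ?_⟩
  · change (K : Set B) ⊆ J
    exact h ▸ Set.subset_biUnion_of_mem hK
  · change (J : Set B) ⊆ a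
    exact h ▸ Set.iUnion₂_subset ha

lemma coe_subset_biUnion_of_isLUB {d : Set (Idl r)} {a : Idl r} (hne : d.Nonempty)
    (hdir : DirectedOn (· ≤ ·) d) (ha : IsLUB d a) : (a : Set B) ⊆ ⋃ K ∈ d, (K : Set B) := by
  let U : Idl r := ⟨_, IsIdeal.biUnion_of_directedOn hne hdir⟩
  exact ha.2 (show U ∈ upperBounds d from fun _ hK => Set.subset_biUnion_of_mem hK)

def subPrincipal (J : Idl r) : Set (Idl r) :=
  {K | ∃ x ∈ (J : Set B), (K : Set B) ⊆ {y | r y x}}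

variable [IsTrans B r] (hbin : ∀ x y : B, r x y → ∃ z : B, r x z ∧ r z y) (J : Idl r)
include hbin

lemma exists_mem_subPrincipal_of_mem {y : B} (hy : y ∈ (J : Set B)) :
    ∃ K ∈ subPrincipal J, y ∈ (K : Set B) := by
  obtain ⟨x, hxJ, hyx⟩ := J.2.exists_mem_rel hy
  obtain ⟨C, hC, hyC, hCx⟩ := exists_isIdeal_mem_subset_setOf_rel hbin hyx
  exact ⟨⟨C, hC⟩, ⟨x, hxJ, hCx⟩, hyC⟩

lemma biUnion_subPrincipal : ⋃ K ∈ subPrincipal J, (K : Set B) = J := by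
  refine subset_antisymm (Set.iUnion₂_subset ?_) fun y hy => ?_
  · rintro K ⟨x, hxJ, hKx⟩
    exact hKx.trans (J.2.setOf_rel_subset hxJ)
  · obtain ⟨K, hK, hyK⟩ := exists_mem_subPrincipal_of_mem hbin J hy
    exact Set.mem_biUnion hK hyK

lemma subPrincipal_nonempty : (subPrincipal J).Nonempty := by
  obtain ⟨y, hy⟩ := J.2.1
  obtain ⟨K, hK, -⟩ := exists_mem_subPrincipal_of_mem hbin J hy
  exact ⟨K, hK⟩

lemma directedOn_subPrincipal : DirectedOn (· ≤ ·) (subPrincipal J) := by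
  rintro K ⟨x, hxJ, hKx⟩ K' ⟨x', hx'J, hK'x'⟩
  obtain ⟨z, hzJ, hxz, hx'z⟩ := J.2.2.1 x hxJ x' hx'J
  obtain ⟨M, hM, hzM⟩ := exists_mem_subPrincipal_of_mem hbin J hzJ
  have hbelow : {y | r y z} ⊆ (M : Set B) := M.2.setOf_rel_subset hzM
  exact ⟨M, hM, fun y hy => hbelow (trans_of r (hKx hy) hxz),
    fun y hy => hbelow (trans_of r (hK'x' hy) hx'z)⟩

end Idl

theorem wayBelow_iff_subset_principal_general {B : Type*} (r : B → B → Prop)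
    (htrans : Transitive r)
    (hbin : ∀ x y : B, r x y → ∃ z : B, r x z ∧ r z y)
    (I J : Idl r) :
    WayBelow I J ↔ ∃ x ∈ (J : Set B), (I : Set B) ⊆ {y : B | r y x} := by
  have : IsTrans B r := ⟨fun _ _ _ => @htrans _ _ _⟩
  constructor
  · intro hIJ
    obtain ⟨K, ⟨x, hxJ, hKx⟩, hIK⟩ :=
      hIJ _ (Idl.subPrincipal_nonempty hbin J) (Idl.directedOn_subPrincipal hbin J) J
        (Idl.isLUB_of_biUnion_eq (Idl.biUnion_subPrincipal hbin J)) le_rfl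
    exact ⟨x, hxJ, fun y hy => hKx (hIK hy)⟩
  · rintro ⟨x, hxJ, hIx⟩ d hne hdir a ha hJa
    obtain ⟨K, hK, hxK⟩ :=
      Set.mem_iUnion₂.mp (Idl.coe_subset_biUnion_of_isLUB hne hdir ha (hJa hxJ))
    exact ⟨K, hK, hIx.trans (K.2.setOf_rel_subset hxK)⟩

/-- For ideals `I`, `J` of an abstract basis `(B, ≺)`: `I` is way below `J` in
`Idl(B, ≺)` iff there exists `x ∈ J` with `I ⊆ ↓x`. -/
theorem wayBelow_iff_subset_principal {B : Type*} (r : B → B → Prop)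
    (htrans : Transitive r)
    (hnull : ∀ x : B, ∃ y : B, r y x)
    (hbin : ∀ x y : B, r x y → ∃ z : B, r x z ∧ r z y)
    (I J : Idl r) :
    WayBelow I J ↔ ∃ x ∈ (J : Set B), (I : Set B) ⊆ {y : B | r y x} :=
  wayBelow_iff_subset_principal_general r htrans hbin I J
end

section
/- Unary interpolation: let D be a partial order that is a dcpo with a basis β : B → D, and let x, y : D. If x ≪ y, then there exists b : B with x ≪ β b and β b ≪ y. -/
/-!
If `x ≪ y`, write `y` as the directed supremum of basis elements `c ≪ y`, and each such `c` in
turn as the directed supremum of elements way below `c`. The union of these second-level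
approximants is still directed with supremum `y` (any two of them lie way below members of the
first level, which have a common upper bound in the first level), so `x` lies below one of them,
say `z ≪ c`. Then `x ≤ z ≪ c ≪ y`, and `c` is the required basis element.
-/

section WayBelow

variable {D : Type*} [Preorder D] {x y z : D}

theorem WayBelow.mono_left_s13 (hxz : x ≤ z) (hzy : WayBelow z y) : WayBelow x y := by
  intro d hdne hddir a ha hya
  obtain ⟨w, hw, hzw⟩ := hzy d hdne hddir a ha hya
  exact ⟨w, hw, hxz.trans hzw⟩

variable {d : Set D} {E : D → Set D}

theorem isLUB_biUnion_of_isLUB (hd : IsLUB d y) (hE : ∀ c ∈ d, IsLUB (E c) c) :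
    IsLUB (⋃ c ∈ d, E c) y := by
  rw [Set.biUnion_eq_iUnion, ← isLUB_iUnion_iff_of_isLUB fun c : d ↦ hE c c.2, Subtype.range_coe]
  exact hd

theorem directedOn_biUnion_of_wayBelow (hd : DirectedOn (· ≤ ·) d)
    (hEne : ∀ c ∈ d, (E c).Nonempty) (hEdir : ∀ c ∈ d, DirectedOn (· ≤ ·) (E c))
    (hElub : ∀ c ∈ d, IsLUB (E c) c) (hEwb : ∀ c ∈ d, ∀ z ∈ E c, WayBelow z c) :
    DirectedOn (· ≤ ·) (⋃ c ∈ d, E c) := by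
  simp only [DirectedOn, Set.mem_iUnion₂]
  rintro z₁ ⟨c₁, hc₁, hz₁⟩ z₂ ⟨c₂, hc₂, hz₂⟩
  obtain ⟨c, hc, hc₁c, hc₂c⟩ := hd c₁ hc₁ c₂ hc₂
  obtain ⟨w₁, hw₁, hzw₁⟩ :=
    hEwb c₁ hc₁ z₁ hz₁ (E c) (hEne c hc) (hEdir c hc) c (hElub c hc) hc₁c
  obtain ⟨w₂, hw₂, hzw₂⟩ :=
    hEwb c₂ hc₂ z₂ hz₂ (E c) (hEne c hc) (hEdir c hc) c (hElub c hc) hc₂c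
  obtain ⟨w, hw, hw₁w, hw₂w⟩ := hEdir c hc w₁ hw₁ w₂ hw₂
  exact ⟨w, ⟨c, hc, hw⟩, hzw₁.trans hw₁w, hzw₂.trans hw₂w⟩

theorem WayBelow.exists_le_of_biUnion (hxy : WayBelow x y) (hdne : d.Nonempty)
    (hddir : DirectedOn (· ≤ ·) d) (hdlub : IsLUB d y)
    (hEne : ∀ c ∈ d, (E c).Nonempty) (hEdir : ∀ c ∈ d, DirectedOn (· ≤ ·) (E c))
    (hElub : ∀ c ∈ d, IsLUB (E c) c) (hEwb : ∀ c ∈ d, ∀ z ∈ E c, WayBelow z c) :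
    ∃ c ∈ d, ∃ z ∈ E c, x ≤ z := by
  obtain ⟨c, hc⟩ := hdne
  obtain ⟨z, hz⟩ := hEne c hc
  have hne : (⋃ c ∈ d, E c).Nonempty := ⟨z, Set.mem_biUnion hc hz⟩
  obtain ⟨z, hz, hxz⟩ := hxy _ hne (directedOn_biUnion_of_wayBelow hddir hEne hEdir hElub hEwb)
    y (isLUB_biUnion_of_isLUB hdlub hElub) le_rfl
  obtain ⟨c, hc, hz⟩ := Set.mem_iUnion₂.mp hz
  exact ⟨c, hc, z, hz, hxz⟩

end WayBelow

theorem unary_interpolation_general {B D : Type*} [PartialOrder D]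
    (β : B → D) (hβ : IsBasis β) (x y : D) (hxy : WayBelow x y) :
    ∃ b : B, WayBelow x (β b) ∧ WayBelow (β b) y := by
  obtain ⟨d, hdne, hddir, hdβ, hdwb, hdlub⟩ := hβ y
  choose E hEne hEdir _ hEwb hElub using hβ
  obtain ⟨c, hc, z, hz, hxz⟩ := hxy.exists_le_of_biUnion hdne hddir hdlub
    (fun c _ ↦ hEne c) (fun c _ ↦ hEdir c) (fun c _ ↦ hElub c) (fun c _ ↦ hEwb c)
  obtain ⟨b, rfl⟩ := hdβ hc
  exact ⟨b, (hEwb _ z hz).mono_left_s13 hxz, hdwb _ hc⟩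

/-- Unary interpolation: in a dcpo with basis `β`, if `x ≪ y` then there is a basis
element `β b` with `x ≪ β b ≪ y`. -/
theorem unary_interpolation {B D : Type*} [PartialOrder D]
    (hD : IsDcpo D) (β : B → D) (hβ : IsBasis β) (x y : D) (hxy : WayBelow x y) :
    ∃ b : B, WayBelow x (β b) ∧ WayBelow (β b) y :=
  unary_interpolation_general β hβ x y hxy
end

section
/- Bases are preserved by continuous retractions: let D and E be partial orders that are dcpos, and let s : D → E and r : E → D be Scott-continuous functions with r (s x) = x for every x : D. If β : B → E is a basis for E, then r ∘ β : B → D is a basis for D. -/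
/-!
Push a witnessing set for `s x` in `E` forward along `r`. Scott continuity of `r` carries
directedness and the supremum `s x` to `r (s x) = x`; and if `y ≪ s x`, a directed set with
supremum above `x` is sent by `s` to one with supremum above `s x`, which some `s z` meets above
`y`, so that `r y ≤ r (s z) = z`.
-/

theorem WayBelow.of_retract {D E : Type*} [Preorder D] [Preorder E] {s : D → E} {r : E → D}
    (hs : ScottContinuous s) (hr : Monotone r) (hrs : Function.LeftInverse r s) {y : E} {x : D}
    (h : WayBelow y (s x)) : WayBelow (r y) x := by
  intro d hne hdir a hlub hxa
  obtain ⟨_, ⟨z, hz, rfl⟩, hyz⟩ := h (s '' d) (hne.image s) (hdir.mono_comp hs.monotone) (s a)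
    (hs hne hdir hlub) (hs.monotone hxa)
  exact ⟨z, hz, hrs z ▸ hr hyz⟩

theorem basis_of_continuous_retract_general {B D E : Type*} [PartialOrder D] [PartialOrder E]
    (s : D → E) (r : E → D) (hs : ScottContinuous s) (hr : ScottContinuous r)
    (hretr : ∀ x : D, r (s x) = x)
    (β : B → E) (hβ : IsBasis β) :
    IsBasis (r ∘ β) := by
  intro x
  obtain ⟨d, hne, hdir, hsub, hwb, hlub⟩ := hβ (s x)
  refine ⟨r '' d, hne.image r, hdir.mono_comp hr.monotone, ?_, ?_, ?_⟩
  · exact Set.range_comp r β ▸ Set.image_mono hsub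
  · rintro _ ⟨y, hy, rfl⟩
    exact (hwb y hy).of_retract hs hr.monotone hretr
  · simpa only [hretr] using hr hne hdir hlub

/-- Bases are preserved by continuous retractions: if `r : E → D` is a Scott-continuous
retraction with Scott-continuous section `s : D → E`, and `β : B → E` is a basis for `E`,
then `r ∘ β` is a basis for `D`. -/
theorem basis_of_continuous_retract {B D E : Type*} [PartialOrder D] [PartialOrder E]
    (hD : IsDcpo D) (hE : IsDcpo E)
    (s : D → E) (r : E → D) (hs : ScottContinuous s) (hr : ScottContinuous r)
    (hretr : ∀ x : D, r (s x) = x)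
    (β : B → E) (hβ : IsBasis β) :
    IsBasis (r ∘ β) :=
  basis_of_continuous_retract_general s r hs hr hretr β hβ
end

section
/- There exist a type D, a partial order on D making it a dcpo with a least element, with at least two distinct elements, such that D is algebraic (it has a basis all of whose values are compact), together with an order isomorphism between D and the type of Scott-continuous functions from D to D ordered pointwise. That is, Scott's model D∞ of the untyped λ-calculus can be taken to be a nontrivial pointed algebraic dcpo isomorphic to its own Scott-continuous self-exponential. -/
/-- `D` is a nontrivial pointed *algebraic* dcpo order-isomorphic to its Scott-continuous
self-exponential (ordered pointwise). -/
def NontrivialPointedAlgebraicDcpoSelfExp (D : Type) [PartialOrder D] : Prop :=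
  IsDcpo D ∧ (∃ bot : D, ∀ x : D, bot ≤ x) ∧ (∃ x y : D, x ≠ y) ∧
    (∃ (B : Type) (β : B → D), IsBasis β ∧ ∀ b : B, WayBelow (β b) (β b)) ∧
    (∀ f g : {f : D → D // ScottContinuous f}, f ≤ g ↔ ∀ x : D, f.1 x ≤ g.1 x) ∧
    Nonempty ({f : D → D // ScottContinuous f} ≃o D)

/-!
Scott's `D∞`, built from finite stages: `D₀ = Bool` and `Dₙ₊₁` is the poset of monotone self-maps
of `Dₙ`, which are all Scott continuous because `Dₙ` is finite. The maps `φₘₙ : Dₘ → Dₙ` with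
`φₘ₊₁,ₙ₊₁ f = φₘₙ ∘ f ∘ φₙₘ` are embeddings for `m ≤ n` and projections for `m ≥ n`, and `D∞` is
the inverse limit of the projections `φₙ₊₁,ₙ`.

Since the stages are finite, a directed supremum in `D∞` is computed coordinatewise and every
coordinate is attained by a member of the set. Hence the approximations `ofStage n xₙ` of `x` are
compact and have supremum `x`. Application `x · y = ⨆ₙ ofStage n (xₙ₊₁ yₙ)` is Scott continuous
in `y` because its `n`-th approximation reads only `yₙ`; its inverse codes a Scott-continuous `f`
by the element whose `(n+1)`-st coordinate is `d ↦ (f (ofStage n d))ₙ`.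
-/

lemma Set.Finite.exists_isGreatest_of_directedOn {α : Type*} [Preorder α] {s : Set α}
    (hs : s.Finite) (hne : s.Nonempty) (hd : DirectedOn (· ≤ ·) s) : ∃ m, IsGreatest s m := by
  obtain ⟨m, hm⟩ := hs.exists_maximal hne
  exact ⟨m, hm.1, hd.is_top_of_is_max hm.1 fun _ ha hle => hm.2 ha hle⟩

def DInfty.stage : ℕ → PartOrd
  | 0 => .of Bool
  | n + 1 => .of (stage n →o stage n)

namespace DInfty

abbrev Stage (n : ℕ) : Type := stage n

namespace Stage

variable {n : ℕ}

-- Instance search does not unfold `stage`, so the identification of `Stage (n + 1)` with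
-- `Stage n →o Stage n` is made explicit by these two casts.
def toHom (f : Stage (n + 1)) : Stage n →o Stage n := f

def ofHom (f : Stage n →o Stage n) : Stage (n + 1) := f

lemma le_def {f g : Stage (n + 1)} : f ≤ g ↔ ∀ d, f.toHom d ≤ g.toHom d := Iff.rfl

@[ext] lemma ext {f g : Stage (n + 1)} (h : ∀ d, f.toHom d = g.toHom d) : f = g :=
  DFunLike.ext (toHom f) (toHom g) h

instance instOrderBot : ∀ n, OrderBot (Stage n)
  | 0 => inferInstanceAs (OrderBot Bool)
  | n + 1 => letI := instOrderBot n; inferInstanceAs (OrderBot (Stage n →o Stage n))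

@[simp] lemma toHom_bot (d : Stage n) : (⊥ : Stage (n + 1)).toHom d = ⊥ := rfl

instance : Nontrivial (Stage 0) := inferInstanceAs (Nontrivial Bool)

instance instFinite : ∀ n, Finite (Stage n)
  | 0 => inferInstanceAs (Finite Bool)
  | n + 1 => letI := instFinite n
    Finite.of_injective (fun f : Stage (n + 1) => (f.toHom : Stage n → Stage n))
      fun _ _ h => ext (congrFun h)

end Stage

noncomputable def stageMap : ∀ m n, Stage m →o Stage n
  | 0, 0 => OrderHom.id
  | 0, n + 1 => ⟨fun b => .ofHom (.const _ (stageMap 0 n b)),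
      fun _ _ h _ => (stageMap 0 n).monotone h⟩
  | m + 1, 0 => (stageMap m 0).comp ⟨fun f => f.toHom ⊥, fun _ _ h => h ⊥⟩
  | m + 1, n + 1 => ⟨fun f => .ofHom ((stageMap m n).comp (f.toHom.comp (stageMap n m))),
      fun _ _ h _ => (stageMap m n).monotone (h _)⟩
termination_by m n => m + n

variable {m n k : ℕ}

@[simp] lemma stageMap_zero_zero (b : Stage 0) : stageMap 0 0 b = b := by
  rw [stageMap]; rfl

@[simp] lemma toHom_stageMap_zero_succ (b : Stage 0) (d : Stage n) :
    (stageMap 0 (n + 1) b).toHom d = stageMap 0 n b := by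
  rw [stageMap]; rfl

@[simp] lemma stageMap_succ_zero (f : Stage (m + 1)) :
    stageMap (m + 1) 0 f = stageMap m 0 (f.toHom ⊥) := by
  rw [stageMap]; rfl

@[simp] lemma toHom_stageMap_succ_succ (f : Stage (m + 1)) (d : Stage n) :
    (stageMap (m + 1) (n + 1) f).toHom d = stageMap m n (f.toHom (stageMap n m d)) := by
  rw [stageMap]; rfl

@[simp] lemma stageMap_self : ∀ n (d : Stage n), stageMap n n d = d
  | 0, _ => stageMap_zero_zero _
  | n + 1, f => Stage.ext fun d => by simp [stageMap_self n]

@[simp] lemma stageMap_bot (m n : ℕ) : stageMap m n ⊥ = ⊥ := by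
  induction m, n using stageMap.induct with
  | case1 => simp
  | case2 n ih => ext; simp [ih]
  | case3 m ih => simpa using ih
  | case4 m n ih _ => ext; simp [ih]

/-- For `n < min m k` this fails: the composite factors through the smaller stage `Dₙ`. -/
lemma stageMap_stageMap (h : min m k ≤ n) (x : Stage m) :
    stageMap n k (stageMap m n x) = stageMap m k x := by
  induction n generalizing m k with
  | zero => obtain rfl | rfl : m = 0 ∨ k = 0 := by omega
            all_goals simp
  | succ n ih =>
    match m, k with
    | 0, 0 => simp [ih (m := 0) (k := 0) (by omega)]
    | 0, k + 1 => ext; simp [ih (m := 0) (k := k) (by omega)]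
    | m + 1, 0 => simp [ih (m := m) (k := 0) (by omega)]
    | m + 1, k + 1 => ext; simp [ih (m := m) (k := k) (by omega), ih (m := k) (k := m) (by omega)]

lemma stageMap_stageMap_le : ∀ m n (x : Stage m), stageMap n m (stageMap m n x) ≤ x
  | 0, n, b => by simp [stageMap_stageMap (m := 0) (n := n) (k := 0) (by omega)]
  | m + 1, 0, f => Stage.le_def.2 fun d => by
    simpa using (stageMap_stageMap_le m 0 _).trans (f.toHom.monotone bot_le)
  | m + 1, n + 1, f => Stage.le_def.2 fun d => by
    simpa using (stageMap_stageMap_le m n _).trans (f.toHom.monotone (stageMap_stageMap_le m n d))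

end DInfty

structure DInfty : Type where
  coord : ∀ n, DInfty.Stage n
  stageMap_coord_succ : ∀ n, DInfty.stageMap (n + 1) n (coord (n + 1)) = coord n

namespace DInfty

noncomputable instance : PartialOrder DInfty :=
  PartialOrder.lift coord fun x y h => by cases x; cases y; congr

variable {m n k : ℕ} {x y : DInfty}

@[ext] lemma ext (h : ∀ n, x.coord n = y.coord n) : x = y := by
  cases x; cases y; congr; exact funext h

lemma le_of_forall_succ (h : ∀ n, x.coord (n + 1) ≤ y.coord (n + 1)) : x ≤ y
  | 0 => x.stageMap_coord_succ 0 ▸ y.stageMap_coord_succ 0 ▸ (stageMap 1 0).monotone (h 0)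
  | n + 1 => h n

lemma ext_succ (h : ∀ n, x.coord (n + 1) = y.coord (n + 1)) : x = y :=
  le_antisymm (le_of_forall_succ fun n => (h n).le) (le_of_forall_succ fun n => (h n).ge)

lemma stageMap_apply (hk : k ≤ n) (x : DInfty) : stageMap n k (x.coord n) = x.coord k := by
  induction n, hk using Nat.le_induction with
  | base => exact stageMap_self _ _
  | succ n hk ih => rw [← stageMap_stageMap (n := n) (by omega), x.stageMap_coord_succ n, ih]

noncomputable def ofStage (n : ℕ) (d : Stage n) : DInfty :=
  ⟨fun k => stageMap n k d, fun k => stageMap_stageMap (by omega) d⟩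

@[simp] lemma ofStage_apply (d : Stage n) (k : ℕ) : (ofStage n d).coord k = stageMap n k d := rfl

lemma ofStage_injective (n : ℕ) : Function.Injective (ofStage n) := fun d e h => by
  simpa using congrArg (·.coord n) h

lemma ofStage_mono : Monotone (ofStage n) := fun _ _ h k => (stageMap n k).monotone h

lemma ofStage_stageMap_succ (d : Stage n) : ofStage (n + 1) (stageMap n (n + 1) d) = ofStage n d :=
  ext fun _ => stageMap_stageMap (by omega) d

noncomputable def approx (x : DInfty) (n : ℕ) : DInfty := ofStage n (x.coord n)

lemma approx_le (x : DInfty) (n : ℕ) : x.approx n ≤ x := fun k => by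
  rcases le_total k n with hk | hk
  · exact (stageMap_apply hk x).le
  · simpa [approx, ← stageMap_apply hk x] using stageMap_stageMap_le k n (x.coord k)

lemma monotone_approx (x : DInfty) : Monotone x.approx := monotone_nat_of_le_succ fun n => by
  rw [approx, ← ofStage_stageMap_succ, ← x.stageMap_coord_succ n]
  exact ofStage_mono (stageMap_stageMap_le _ _ _)

lemma approx_mono (h : x ≤ y) (n : ℕ) : x.approx n ≤ y.approx n := ofStage_mono (h n)

lemma isLUB_approx (x : DInfty) : IsLUB (Set.range x.approx) x :=
  ⟨Set.forall_mem_range.2 x.approx_le, fun u hu k => by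
    simpa [approx] using hu ⟨k, rfl⟩ k⟩

lemma exists_isLUB {d : Set DInfty} (hne : d.Nonempty) (hd : DirectedOn (· ≤ ·) d) :
    ∃ a : DInfty, IsLUB d a ∧ ∀ n, ∃ x ∈ d, x.coord n = a.coord n := by
  have hgreatest (n : ℕ) : ∃ m, IsGreatest ((fun x : DInfty => x.coord n) '' d) m :=
    (Set.toFinite _).exists_isGreatest_of_directedOn (hne.image _)
      (hd.mono_comp fun _ _ h => h n)
  choose m hm using hgreatest
  have hattained (n : ℕ) : ∃ x ∈ d, x.coord n = m n := (hm n).1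
  choose w hw hwm using hattained
  have hcoh (n : ℕ) : stageMap (n + 1) n (m (n + 1)) = m n := by
    refine le_antisymm ?_ ?_
    · rw [← hwm, (w (n + 1)).stageMap_coord_succ]
      exact (hm n).2 ⟨_, hw (n + 1), rfl⟩
    · rw [← hwm n, ← (w n).stageMap_coord_succ]
      exact (stageMap (n + 1) n).monotone ((hm (n + 1)).2 ⟨_, hw n, rfl⟩)
  refine ⟨⟨m, hcoh⟩, ⟨fun x hx n => (hm n).2 ⟨x, hx, rfl⟩, fun u hu n => ?_⟩,
    fun n => ⟨w n, hw n, hwm n⟩⟩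
  show m n ≤ u.coord n
  rw [← hwm n]
  exact hu (hw n) n

lemma isDcpo : IsDcpo DInfty := fun _ hne hd =>
  (exists_isLUB hne hd).imp fun _ h => h.1

lemma exists_apply_eq_of_isLUB {d : Set DInfty} (hne : d.Nonempty) (hd : DirectedOn (· ≤ ·) d)
    {a : DInfty} (ha : IsLUB d a) (n : ℕ) : ∃ x ∈ d, x.coord n = a.coord n := by
  obtain ⟨b, hb, hattained⟩ := exists_isLUB hne hd
  exact hb.unique ha ▸ hattained n

lemma eventually_apply_eq_of_isLUB {c : ℕ → DInfty} (hc : Monotone c) {a : DInfty}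
    (ha : IsLUB (Set.range c) a) (k : ℕ) : ∃ N, ∀ m ≥ N, (c m).coord k = a.coord k := by
  obtain ⟨_, ⟨N, rfl⟩, hN⟩ :=
    exists_apply_eq_of_isLUB (Set.range_nonempty c) hc.directed_le.directedOn_range ha k
  exact ⟨N, fun m hm => le_antisymm (ha.1 ⟨m, rfl⟩ k) (hN ▸ hc hm k)⟩

lemma wayBelow_ofStage (h : d ≤ x.coord n) : WayBelow (ofStage n d) x := by
  intro s hne hs a ha hxa
  obtain ⟨z, hz, hzn⟩ := exists_apply_eq_of_isLUB hne hs ha n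
  refine ⟨z, hz, le_trans (ofStage_mono ?_) (z.approx_le n)⟩
  exact hzn ▸ h.trans (hxa n)

lemma isBasis_ofStage : IsBasis fun b : Σ n, Stage n => ofStage b.1 b.2 := fun x =>
  ⟨Set.range x.approx, Set.range_nonempty _, x.monotone_approx.directed_le.directedOn_range,
    Set.range_subset_iff.2 fun n => ⟨⟨n, x.coord n⟩, rfl⟩,
    Set.forall_mem_range.2 fun _ => wayBelow_ofStage le_rfl, x.isLUB_approx⟩

lemma wayBelow_ofStage_self (d : Stage n) : WayBelow (ofStage n d) (ofStage n d) :=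
  wayBelow_ofStage (stageMap_self n d).ge

noncomputable instance : OrderBot DInfty where
  bot := ofStage 0 ⊥
  bot_le x n := by simp

instance : Nontrivial DInfty :=
  (ofStage_injective 0).nontrivial

noncomputable def appApprox (x y : DInfty) (n : ℕ) : DInfty :=
  ofStage n ((x.coord (n + 1)).toHom (y.coord n))

lemma monotone_appApprox (x y : DInfty) : Monotone (appApprox x y) :=
  monotone_nat_of_le_succ fun n => by
    have hx : (x.coord (n + 1)).toHom (y.coord n) =
        stageMap (n + 1) n ((x.coord (n + 2)).toHom (stageMap n (n + 1) (y.coord n))) := by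
      rw [← toHom_stageMap_succ_succ, x.stageMap_coord_succ]
    rw [appApprox, hx, ← ofStage_stageMap_succ]
    refine ofStage_mono ((stageMap_stageMap_le _ _ _).trans ((x.coord (n + 2)).toHom.monotone ?_))
    rw [← y.stageMap_coord_succ n]
    exact stageMap_stageMap_le _ _ _

lemma appApprox_mono {x x' y y' : DInfty} (hx : x ≤ x') (hy : y ≤ y') (n : ℕ) :
    appApprox x y n ≤ appApprox x' y' n :=
  ofStage_mono (((x.coord (n + 1)).toHom.monotone (hy n)).trans (hx (n + 1) _))

lemma coord_appApprox_ofStage (x : DInfty) (d : Stage n) (hnm : n ≤ m) :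
    (appApprox x (ofStage n d) m).coord n = (x.coord (n + 1)).toHom d := by
  rw [appApprox, ofStage_apply, ofStage_apply, ← toHom_stageMap_succ_succ,
    stageMap_apply (by omega)]

noncomputable def app (x y : DInfty) : DInfty :=
  (exists_isLUB (Set.range_nonempty _) (monotone_appApprox x y).directed_le.directedOn_range).choose

lemma isLUB_app (x y : DInfty) : IsLUB (Set.range (appApprox x y)) (app x y) :=
  (exists_isLUB (Set.range_nonempty _)
    (monotone_appApprox x y).directed_le.directedOn_range).choose_spec.1

lemma app_mono {x x' y y' : DInfty} (hx : x ≤ x') (hy : y ≤ y') : app x y ≤ app x' y' :=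
  (isLUB_app x y).2 <| Set.forall_mem_range.2 fun n =>
    (appApprox_mono hx hy n).trans ((isLUB_app x' y').1 ⟨n, rfl⟩)

lemma scottContinuous_app (x : DInfty) : ScottContinuous (app x) := by
  intro d hne hd a ha
  refine ⟨Set.forall_mem_image.2 fun y hy => app_mono le_rfl (ha.1 hy), fun u hu k => ?_⟩
  obtain ⟨N, hN⟩ := eventually_apply_eq_of_isLUB (monotone_appApprox x a) (isLUB_app x a) k
  obtain ⟨y, hy, hyN⟩ := exists_apply_eq_of_isLUB hne hd ha N
  have hyApprox : appApprox x y N = appApprox x a N := by rw [appApprox, appApprox, hyN]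
  calc (app x a).coord k = (appApprox x y N).coord k := by rw [← hN N le_rfl, hyApprox]
    _ ≤ (app x y).coord k := (isLUB_app x y).1 ⟨N, rfl⟩ k
    _ ≤ u.coord k := hu ⟨y, hy, rfl⟩ k

noncomputable def ofSuccCoord (c : ∀ n, Stage (n + 1))
    (hc : ∀ n, stageMap (n + 2) (n + 1) (c (n + 1)) = c n) : DInfty :=
  ⟨fun n => stageMap (n + 1) n (c n), fun n => by rw [hc]⟩

lemma coord_ofSuccCoord_succ {c : ∀ n, Stage (n + 1)}
    (hc : ∀ n, stageMap (n + 2) (n + 1) (c (n + 1)) = c n) (n : ℕ) :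
    (ofSuccCoord c hc).coord (n + 1) = c n :=
  hc n

section lam

variable {f g : DInfty → DInfty}

noncomputable def restrictCoord (f : DInfty → DInfty) (hf : Monotone f) (n : ℕ) :
    Stage (n + 1) :=
  .ofHom ⟨fun d => (f (ofStage n d)).coord n, fun _ _ h => hf (ofStage_mono h) n⟩

@[simp] lemma toHom_restrictCoord (hf : Monotone f) (d : Stage n) :
    (restrictCoord f hf n).toHom d = (f (ofStage n d)).coord n :=
  rfl

lemma stageMap_restrictCoord (hf : Monotone f) (n : ℕ) :
    stageMap (n + 2) (n + 1) (restrictCoord f hf (n + 1)) = restrictCoord f hf n :=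
  Stage.ext fun d => by
    simp [← ofStage_stageMap_succ (d := d), stageMap_coord_succ]

noncomputable def lam (f : DInfty → DInfty) (hf : Monotone f) : DInfty :=
  ofSuccCoord (restrictCoord f hf) (stageMap_restrictCoord hf)

lemma coord_lam_succ (hf : Monotone f) (n : ℕ) : (lam f hf).coord (n + 1) = restrictCoord f hf n :=
  coord_ofSuccCoord_succ _ n

lemma lam_mono {hf : Monotone f} {hg : Monotone g} (h : ∀ y, f y ≤ g y) : lam f hf ≤ lam g hg :=
  le_of_forall_succ fun n => by
    rw [coord_lam_succ, coord_lam_succ]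
    exact Stage.le_def.2 fun d => h _ n

lemma appApprox_lam (hf : Monotone f) (y : DInfty) (n : ℕ) :
    appApprox (lam f hf) y n = (f (y.approx n)).approx n := by
  rw [appApprox, coord_lam_succ]
  rfl

lemma lam_app (x : DInfty) : lam (app x) (scottContinuous_app x).monotone = x :=
  ext_succ fun n => Stage.ext fun d => by
    rw [coord_lam_succ, toHom_restrictCoord]
    obtain ⟨N, hN⟩ :=
      eventually_apply_eq_of_isLUB (monotone_appApprox _ _) (isLUB_app x (ofStage n d)) n
    rw [← hN (max N n) (le_max_left _ _), coord_appApprox_ofStage x d (le_max_right _ _)]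

/-- `f y` is the supremum of the `f (y.approx m)`, and the `k`-th approximation of each of these
is dominated by a diagonal term `(f (y.approx M)).approx M`. -/
lemma app_lam (hf : ScottContinuous f) (y : DInfty) : app (lam f hf.monotone) y = f y := by
  refine (isLUB_app _ y).unique ?_
  rw [show appApprox (lam f hf.monotone) y = fun n => (f (y.approx n)).approx n from
    funext (appApprox_lam hf.monotone y)]
  refine ⟨Set.forall_mem_range.2 fun n => ((f _).approx_le n).trans (hf.monotone (y.approx_le n)),
    fun u hu => ?_⟩
  have hfy : IsLUB (f '' Set.range y.approx) (f y) :=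
    hf (Set.range_nonempty _) y.monotone_approx.directed_le.directedOn_range y.isLUB_approx
  refine hfy.2 (Set.forall_mem_image.2 (Set.forall_mem_range.2 fun m => ?_))
  refine (isLUB_approx _).2 (Set.forall_mem_range.2 fun k => ?_)
  calc (f (y.approx m)).approx k ≤ (f (y.approx m)).approx (max m k) :=
        monotone_approx _ (le_max_right _ _)
    _ ≤ (f (y.approx (max m k))).approx (max m k) :=
        approx_mono (hf.monotone (y.monotone_approx (le_max_left _ _))) _
    _ ≤ u := hu ⟨_, rfl⟩

end lam

noncomputable def scottContinuousOrderIso :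
    {f : DInfty → DInfty // ScottContinuous f} ≃o DInfty where
  toFun f := lam f.1 f.2.monotone
  invFun x := ⟨app x, scottContinuous_app x⟩
  left_inv f := Subtype.ext (funext (app_lam f.2))
  right_inv := lam_app
  map_rel_iff' {f g} := ⟨fun h y => calc
      f.1 y = app (lam f.1 f.2.monotone) y := (app_lam f.2 y).symm
      _ ≤ app (lam g.1 g.2.monotone) y := app_mono h le_rfl
      _ = g.1 y := app_lam g.2 y,
    fun h => lam_mono h⟩

end DInfty

/-- Scott's `D∞`: there exists a nontrivial pointed algebraic dcpo isomorphic to its own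
Scott-continuous self-exponential. -/
theorem exists_nontrivial_pointed_algebraic_dcpo_iso_self_exponential :
    ∃ (D : Type) (inst : PartialOrder D), @NontrivialPointedAlgebraicDcpoSelfExp D inst :=
  ⟨DInfty, inferInstance, DInfty.isDcpo, ⟨⊥, fun _ => bot_le⟩, exists_pair_ne DInfty,
    ⟨Σ n, DInfty.Stage n, _, DInfty.isBasis_ofStage, fun b => DInfty.wayBelow_ofStage_self b.2⟩,
    fun _ _ => Iff.rfl, ⟨DInfty.scottContinuousOrderIso⟩⟩
end
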